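/- arXiv:2605.16852 — 12 statements merged into one kernel-verified Lean document; each statement's English description precedes it below -/
import Mathlib

section
/- Let G be a connected graph and let f, g : {0,...,ℓ} → V(G) be walks on the path graph P_n (n ≥ 3, vertices 1,...,n in natural order) such that the distance d(f(0), g(0)) is even. If f is surjective (visits all vertices), then there exists a time t ∈ {0,...,ℓ} with f(t) = g(t). -/
/-!
Walks on `pathGraph n` alternate the parity of the vertex index, so two synchronous walks keep
`f t ≡ g t (mod 2)` forever, and the initial distance being even means this congruence holds at
time `0`. Hence `(f t - g t) / 2` is an integer changing by at most one per step. It is `≤ 0`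
when `f` visits the first vertex and `≥ 0` when `f` visits the last, so by the discrete
intermediate value theorem it vanishes at some time, which is a collision.
-/

open SimpleGraph

namespace SimpleGraph

theorem pathGraph_even_dist_iff {n : ℕ} (u v : Fin n) :
    Even ((pathGraph n).dist u v) ↔ u.val % 2 = v.val % 2 := by
  obtain ⟨p, hp⟩ := (pathGraph_preconnected n u v).exists_walk_length_eq_dist
  rw [← hp, (pathGraph.bicoloring n).even_length_iff_congr p]
  simp only [pathGraph.bicoloring, Coloring.mk, completeGraph_eq_top, RelHom.coeFn_mk,
    decide_eq_true_eq]
  omega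

variable {n : ℕ} {u u' v v' : Fin n}

theorem pathGraph_mod_two_eq_iff_of_adj (hu : (pathGraph n).Adj u u')
    (hv : (pathGraph n).Adj v v') : u.val % 2 = v.val % 2 ↔ u'.val % 2 = v'.val % 2 := by
  rw [pathGraph_adj] at hu hv
  omega

theorem pathGraph_abs_half_sub_le_one_of_adj (hu : (pathGraph n).Adj u u')
    (hv : (pathGraph n).Adj v v') (huv : u.val % 2 = v.val % 2) :
    |((u' : ℤ) - v') / 2 - ((u : ℤ) - v) / 2| ≤ 1 := by
  have huv' := (pathGraph_mod_two_eq_iff_of_adj hu hv).mp huv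
  rw [pathGraph_adj] at hu hv
  rw [abs_le]
  omega

end SimpleGraph

theorem Int.exists_eq_zero_of_abs_sub_le_one {h : ℕ → ℤ} {ℓ a b : ℕ}
    (hstep : ∀ t < ℓ, |h (t + 1) - h t| ≤ 1) (ha : a ≤ ℓ) (hb : b ≤ ℓ)
    (ha0 : h a ≤ 0) (hb0 : 0 ≤ h b) : ∃ t ≤ ℓ, h t = 0 := by
  wlog hab : a ≤ b generalizing h a b
  · obtain ⟨t, ht, hzero⟩ := this (h := (- h ·))
      (fun t ht ↦ by rw [← neg_sub', abs_neg]; exact hstep t ht) hb ha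
      (neg_nonpos.mpr hb0) (neg_nonneg.mpr ha0) (le_of_not_ge hab)
    exact ⟨t, ht, neg_eq_zero.mp hzero⟩
  induction b, hab using Nat.le_induction with
  | base => exact ⟨a, ha, le_antisymm ha0 hb0⟩
  | succ b hab ih =>
    by_cases hb0' : 0 ≤ h b
    · exact ih (by omega) hb0'
    · have := abs_le.mp (hstep b hb)
      exact ⟨b + 1, hb, by omega⟩

theorem stmt_0_general (n ℓ : ℕ) (f g : ℕ → Fin n)
    (hf : ∀ t < ℓ, (pathGraph n).Adj (f t) (f (t + 1)))
    (hg : ∀ t < ℓ, (pathGraph n).Adj (g t) (g (t + 1)))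
    (hpar : Even ((pathGraph n).dist (f 0) (g 0)))
    (hsurj : ∀ v : Fin n, ∃ t ≤ ℓ, f t = v) :
    ∃ t ≤ ℓ, f t = g t := by
  have hmod : ∀ t ≤ ℓ, (f t).val % 2 = (g t).val % 2 := by
    intro t ht
    induction t with
    | zero => exact (pathGraph_even_dist_iff _ _).mp hpar
    | succ t ih => exact (pathGraph_mod_two_eq_iff_of_adj (hf t ht) (hg t ht)).mp (ih (by omega))
  have hpos : 0 < n := (f 0).pos
  obtain ⟨t₀, ht₀, hft₀⟩ := hsurj ⟨0, hpos⟩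
  obtain ⟨t₁, ht₁, hft₁⟩ := hsurj ⟨n - 1, by omega⟩
  obtain ⟨t, ht, hzero⟩ := Int.exists_eq_zero_of_abs_sub_le_one
    (h := fun t ↦ ((f t : ℤ) - g t) / 2)
    (fun t ht ↦ pathGraph_abs_half_sub_le_one_of_adj (hf t ht) (hg t ht) (hmod t ht.le))
    ht₀ ht₁ (by simp only [hft₀]; omega) (by simp only [hft₁]; omega)
  have := hmod t ht
  exact ⟨t, ht, Fin.ext (by omega)⟩

/-- On the path graph `P n` (n ≥ 3), if `f` and `g` are walks of length `ℓ` whose initial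
distance is even and `f` visits all vertices, then they collide at some time. -/
theorem stmt_0 (n ℓ : ℕ) (hn : 3 ≤ n) (f g : ℕ → Fin n)
    (hf : ∀ t < ℓ, (pathGraph n).Adj (f t) (f (t + 1)))
    (hg : ∀ t < ℓ, (pathGraph n).Adj (g t) (g (t + 1)))
    (hpar : Even ((pathGraph n).dist (f 0) (g 0)))
    (hsurj : ∀ v : Fin n, ∃ t ≤ ℓ, f t = v) :
    ∃ t ≤ ℓ, f t = g t :=
  stmt_0_general n ℓ f g hf hg hpar hsurj
end

section
/- For every n ≥ 2, the direct capacity of the path P_n equals 2. That is: (a) there exist an ℓ ≥ 0 and two surjective walks f, g : {0,...,ℓ} → V(P_n) with d(f(t), g(t)) ≥ 1 for all t; and (b) there do not exist three surjective walks f₁, f₂, f₃ : {0,...,ℓ} → V(P_n) that are pairwise at distance ≥ 1 at every time step. -/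
open SimpleGraph

/-- The direct capacity of the path `P n` (n ≥ 2) equals 2: two surjective walks keeping
distance ≥ 1 exist, but three do not. -/
theorem stmt_1 (n : ℕ) (hn : 2 ≤ n) :
    (∃ ℓ : ℕ, ∃ f g : ℕ → Fin n,
      (∀ t < ℓ, (pathGraph n).Adj (f t) (f (t + 1))) ∧
      (∀ t < ℓ, (pathGraph n).Adj (g t) (g (t + 1))) ∧
      (∀ v : Fin n, ∃ t ≤ ℓ, f t = v) ∧
      (∀ v : Fin n, ∃ t ≤ ℓ, g t = v) ∧
      (∀ t ≤ ℓ, 1 ≤ (pathGraph n).dist (f t) (g t))) ∧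
    ¬ ∃ ℓ : ℕ, ∃ f : Fin 3 → ℕ → Fin n,
      (∀ i, ∀ t < ℓ, (pathGraph n).Adj (f i t) (f i (t + 1))) ∧
      (∀ i, ∀ v : Fin n, ∃ t ≤ ℓ, f i t = v) ∧
      (∀ i j, i ≠ j → ∀ t ≤ ℓ, 1 ≤ (pathGraph n).dist (f i t) (f j t)) := by
  obtain ⟨m, rfl⟩ : ∃ m, n = m + 1 := ⟨n - 1, by omega⟩
  have hm : 1 ≤ m := by omega
  -- the zigzag walk
  set z : ℕ → ℕ := fun t => if t % (2 * m) ≤ m then t % (2 * m) else 2 * m - t % (2 * m)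
    with hz
  have hzle : ∀ t, z t ≤ m := by
    intro t
    simp only [hz]
    split <;> omega
  have hzstep : ∀ t, z t + 1 = z (t + 1) ∨ z (t + 1) + 1 = z t := by
    intro t
    have h2m : 0 < 2 * m := by omega
    have hs : t % (2 * m) < 2 * m := Nat.mod_lt _ h2m
    have hsucc : (t + 1) % (2 * m) = (t % (2 * m) + 1) % (2 * m) := by
      rw [Nat.add_mod, Nat.mod_eq_of_lt (show 1 < 2 * m by omega)]
    by_cases hc : t % (2 * m) + 1 = 2 * m
    · have : (t + 1) % (2 * m) = 0 := by rw [hsucc, hc, Nat.mod_self]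
      simp only [hz, this, hc.symm ▸ hs]
      split <;> split <;> omega
    · have : (t + 1) % (2 * m) = t % (2 * m) + 1 := by
        rw [hsucc, Nat.mod_eq_of_lt (by omega)]
      simp only [hz, this]
      split <;> split <;> omega
  have hltn : ∀ t, z t < m + 1 := fun t => by have := hzle t; omega
  have hconn : (pathGraph (m + 1)).Connected := pathGraph_connected m
  constructor
  · -- existence of two walks
    refine ⟨2 * m, fun t => ⟨z t, hltn t⟩, fun t => ⟨z (t + 1), hltn (t + 1)⟩, ?_, ?_, ?_, ?_, ?_⟩
    · intro t _
      rw [pathGraph_adj]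
      show z t + 1 = z (t + 1) ∨ z (t + 1) + 1 = z t
      exact hzstep t
    · intro t _
      rw [pathGraph_adj]
      show z (t + 1) + 1 = z (t + 1 + 1) ∨ z (t + 1 + 1) + 1 = z (t + 1)
      exact hzstep (t + 1)
    · intro v
      refine ⟨v.val, by omega, ?_⟩
      have hv : v.val ≤ m := by omega
      have : z v.val = v.val := by
        simp only [hz, Nat.mod_eq_of_lt (show v.val < 2 * m by omega)]
        split <;> omega
      exact Fin.ext (show z v.val = v.val from this)
    · intro v
      by_cases hv0 : v.val = 0
      · refine ⟨2 * m - 1, by omega, ?_⟩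
        have h1 : 2 * m - 1 + 1 = 2 * m := by omega
        have : z (2 * m - 1 + 1) = 0 := by
          simp only [hz, h1, Nat.mod_self]
          split <;> omega
        refine Fin.ext ?_
        show z (2 * m - 1 + 1) = v.val
        rw [this, hv0]
      · refine ⟨v.val - 1, by omega, ?_⟩
        have h1 : v.val - 1 + 1 = v.val := by omega
        have hv : v.val ≤ m := by omega
        have : z (v.val - 1 + 1) = v.val := by
          simp only [hz, h1, Nat.mod_eq_of_lt (show v.val < 2 * m by omega)]
          split <;> omega
        exact Fin.ext (show z (v.val - 1 + 1) = v.val from this)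
    · intro t _
      refine hconn.pos_dist_of_ne ?_
      intro h
      have hval : z t = z (t + 1) := congrArg Fin.val h
      have := hzstep t
      omega
  · -- impossibility of three walks
    rintro ⟨ℓ, f, hadj, hsurj, hdist⟩
    -- positions never coincide
    have hne : ∀ i j, i ≠ j → ∀ t ≤ ℓ, (f i t).val ≠ (f j t).val := by
      intro i j hij t ht h
      have h1 := hdist i j hij t ht
      have : f i t = f j t := Fin.ext h
      rw [this, SimpleGraph.dist_self] at h1
      omega
    -- step facts
    have hstep : ∀ i, ∀ t < ℓ, (f i t).val + 1 = (f i (t + 1)).val ∨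
        (f i (t + 1)).val + 1 = (f i t).val := by
      intro i t ht
      have := hadj i t ht
      rw [pathGraph_adj] at this
      exact this
    -- find two walkers with the same starting parity
    have key : ∀ i j, i ≠ j → (f i 0).val % 2 = (f j 0).val % 2 →
        (f i 0).val < (f j 0).val → False := by
      intro i j hij hpar hlt
      have main : ∀ t ≤ ℓ, (f i t).val < (f j t).val ∧
          (f i t).val % 2 = (f j t).val % 2 := by
        intro t
        induction t with
        | zero => intro _; exact ⟨hlt, hpar⟩
        | succ t ih =>
          intro ht
          have ht' : t ≤ ℓ := by omega
          obtain ⟨ihlt, ihpar⟩ := ih ht'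
          have hi := hstep i t (by omega)
          have hj := hstep j t (by omega)
          have hne' := hne i j hij (t + 1) ht
          omega
      obtain ⟨t, ht, hft⟩ := hsurj i ⟨m, by omega⟩
      have := (main t ht).1
      have hj : (f j t).val < m + 1 := (f j t).isLt
      have : (f i t).val = m := congrArg Fin.val hft
      omega
    -- pigeonhole on parities of three starting positions
    have h01 := hne 0 1 (by decide) 0 (Nat.zero_le _)
    have h02 := hne 0 2 (by decide) 0 (Nat.zero_le _)
    have h12 := hne 1 2 (by decide) 0 (Nat.zero_le _)
    set a := (f 0 0).val
    set b := (f 1 0).val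
    set c := (f 2 0).val
    by_cases hab : a % 2 = b % 2
    · rcases lt_or_gt_of_ne h01 with h | h
      · exact key 0 1 (by decide) hab h
      · exact key 1 0 (by decide) hab.symm h
    · by_cases hac : a % 2 = c % 2
      · rcases lt_or_gt_of_ne h02 with h | h
        · exact key 0 2 (by decide) hac h
        · exact key 2 0 (by decide) hac.symm h
      · have hbc : b % 2 = c % 2 := by omega
        rcases lt_or_gt_of_ne h12 with h | h
        · exact key 1 2 (by decide) hbc h
        · exact key 2 1 (by decide) hbc.symm h
end

section
/- For the complete bipartite graph K_{r,s} with 2 ≤ r ≤ s, vertices X = {x₀,...,x_{r−1}}, Y = {y₀,...,y_{s−1}}, define for j ∈ {1,...,r} and t ∈ {0,...,2s−1}: f_j(t) = x_{(j−1+t/2) mod r} if t is even, and f_j(t) = y_{(j−1+(t−1)/2) mod s} if t is odd. Then each f_j is a walk on K_{r,s}, each f_j is surjective onto V(K_{r,s}), and d(f_i(t), f_j(t)) ≥ 2 for all i ≠ j and all t. Consequently the direct 2-capacity of K_{r,s} equals r. -/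
lemma cb_adj {V W : Type*} (a : V) (b : W) :
    (completeBipartiteGraph V W).Adj (Sum.inl a) (Sum.inr b) := by
  simp [completeBipartiteGraph]

lemma cb_two_le_dist {r s : ℕ} (hr : 1 ≤ r) (hs : 1 ≤ s) (x y : Fin r ⊕ Fin s)
    (hne : x ≠ y) :
    2 ≤ (completeBipartiteGraph (Fin r) (Fin s)).dist x y ∨
    (completeBipartiteGraph (Fin r) (Fin s)).Adj x y := by
  by_cases hadj : (completeBipartiteGraph (Fin r) (Fin s)).Adj x y
  · exact Or.inr hadj
  left
  have hreach : (completeBipartiteGraph (Fin r) (Fin s)).Reachable x y := by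
    obtain a | a := x <;> obtain b | b := y
    · exact ((cb_adj a (⟨0, hs⟩ : Fin s)).toWalk.append
        (cb_adj b (⟨0, hs⟩ : Fin s)).toWalk.reverse).reachable
    · exact (cb_adj a b).reachable
    · exact (cb_adj b a).reachable.symm
    · exact (((cb_adj (⟨0, hr⟩ : Fin r) a).symm.toWalk.append
        (cb_adj (⟨0, hr⟩ : Fin r) b).toWalk)).reachable
  have h1 : 0 < (completeBipartiteGraph (Fin r) (Fin s)).dist x y :=
    hreach.pos_dist_of_ne hne
  have h2 : (completeBipartiteGraph (Fin r) (Fin s)).dist x y ≠ 1 := by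
    rw [Ne, SimpleGraph.dist_eq_one_iff_adj]; exact hadj
  omega

/-- In `K_{r,s}` (2 ≤ r ≤ s), the explicit functions
`f j t = x_{(j + t/2) mod r}` for even `t` and `f j t = y_{(j + (t−1)/2) mod s}` for odd `t`
(players indexed by `j ∈ {0,…,r−1}`) are surjective walks of length `2s − 1` pairwise at
distance ≥ 2 at every time; consequently the direct 2-capacity of `K_{r,s}` equals `r`. -/
theorem stmt_7 (r s : ℕ) (hr : 2 ≤ r) (hrs : r ≤ s)
    (f : Fin r → ℕ → (Fin r ⊕ Fin s))
    (hf : ∀ (j : Fin r) (t : ℕ), f j t =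
      if Even t then Sum.inl ⟨((j : ℕ) + t / 2) % r, Nat.mod_lt _ (by omega)⟩
      else Sum.inr ⟨((j : ℕ) + (t - 1) / 2) % s, Nat.mod_lt _ (by omega)⟩) :
    (∀ j, ∀ t < 2 * s - 1, (completeBipartiteGraph (Fin r) (Fin s)).Adj (f j t) (f j (t + 1))) ∧
    (∀ j, ∀ v : Fin r ⊕ Fin s, ∃ t ≤ 2 * s - 1, f j t = v) ∧
    (∀ i j, i ≠ j → ∀ t ≤ 2 * s - 1,
      2 ≤ (completeBipartiteGraph (Fin r) (Fin s)).dist (f i t) (f j t)) ∧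
    (∀ (k ℓ : ℕ) (g : Fin k → ℕ → (Fin r ⊕ Fin s)),
      (∀ i, ∀ t < ℓ, (completeBipartiteGraph (Fin r) (Fin s)).Adj (g i t) (g i (t + 1))) →
      (∀ i, ∀ v : Fin r ⊕ Fin s, ∃ t ≤ ℓ, g i t = v) →
      (∀ i j, i ≠ j → ∀ t ≤ ℓ,
        2 ≤ (completeBipartiteGraph (Fin r) (Fin s)).dist (g i t) (g j t)) →
      k ≤ r) := by
  refine ⟨?_, ?_, ?_, ?_⟩
  · intro j t _
    rcases Nat.even_or_odd t with he | ho
    · rw [hf j t, hf j (t+1), if_pos he, if_neg (by simp [Nat.even_add_one, he])]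
      exact cb_adj _ _
    · rw [hf j t, hf j (t+1), if_neg (by simpa using ho),
        if_pos (by simpa [Nat.even_add_one] using ho)]
      exact (cb_adj _ _).symm
  · intro j v
    obtain a | b := v
    · have hmod := Nat.mod_lt ((a : ℕ) + r - j) (show 0 < r by omega)
      refine ⟨2 * (((a : ℕ) + r - j) % r), by omega, ?_⟩
      rw [hf, if_pos (even_two_mul _)]
      congr 1
      ext
      simp only [Nat.mul_div_cancel_left _ (by norm_num : 0 < 2)]
      have hj := j.isLt
      have ha := a.isLt
      calc ((j : ℕ) + ((a : ℕ) + r - j) % r) % r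
          = ((j : ℕ) + ((a : ℕ) + r - j)) % r := Nat.ModEq.add_left _ (Nat.mod_modEq _ _)
        _ = ((a : ℕ) + r) % r := by congr 1; omega
        _ = (a : ℕ) := by rw [Nat.add_mod_right, Nat.mod_eq_of_lt ha]
    · have hmod := Nat.mod_lt ((b : ℕ) + s - j) (show 0 < s by omega)
      refine ⟨2 * (((b : ℕ) + s - j) % s) + 1, by omega, ?_⟩
      rw [hf, if_neg (by simp [Nat.even_add_one])]
      congr 1
      ext
      simp only [Nat.add_sub_cancel, Nat.mul_div_cancel_left _ (by norm_num : 0 < 2)]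
      have hj : (j : ℕ) < s := lt_of_lt_of_le j.isLt hrs
      have hb := b.isLt
      calc ((j : ℕ) + ((b : ℕ) + s - j) % s) % s
          = ((j : ℕ) + ((b : ℕ) + s - j)) % s := Nat.ModEq.add_left _ (Nat.mod_modEq _ _)
        _ = ((b : ℕ) + s) % s := by congr 1; omega
        _ = (b : ℕ) := by rw [Nat.add_mod_right, Nat.mod_eq_of_lt hb]
  · intro i j hij t _
    have hne : f i t ≠ f j t := by
      rw [hf, hf]
      have hi := i.isLt; have hj := j.isLt
      have hij' : (i : ℕ) ≠ j := fun h => hij (Fin.ext h)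
      split
      · simp only [ne_eq, Sum.inl.injEq, Fin.mk.injEq]
        intro h
        have h2 := Nat.ModEq.add_right_cancel' (t / 2) h
        rw [Nat.ModEq, Nat.mod_eq_of_lt hi, Nat.mod_eq_of_lt hj] at h2
        exact hij' h2
      · simp only [ne_eq, Sum.inr.injEq, Fin.mk.injEq]
        intro h
        have hi' : (i : ℕ) < s := by omega
        have hj' : (j : ℕ) < s := by omega
        have h2 := Nat.ModEq.add_right_cancel' ((t - 1) / 2) h
        rw [Nat.ModEq, Nat.mod_eq_of_lt hi', Nat.mod_eq_of_lt hj'] at h2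
        exact hij' h2
    have hnadj : ¬ (completeBipartiteGraph (Fin r) (Fin s)).Adj (f i t) (f j t) := by
      rw [hf, hf]; split <;> simp [completeBipartiteGraph]
    rcases cb_two_le_dist (by omega) (by omega) _ _ hne with h | h
    · exact h
    · exact absurd h hnadj
  · intro k ℓ g hwalk hsurj hdist
    by_contra hk
    push_neg at hk
    have hk1 : 0 < k := by omega
    have hℓ : 1 ≤ ℓ := by
      by_contra h
      push_neg at h
      interval_cases ℓ
      obtain ⟨t1, ht1, h1⟩ := hsurj ⟨0, hk1⟩ (Sum.inl ⟨0, by omega⟩)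
      obtain ⟨t2, ht2, h2⟩ := hsurj ⟨0, hk1⟩ (Sum.inr ⟨0, by omega⟩)
      interval_cases t1; interval_cases t2
      rw [h1] at h2; exact Sum.inl_ne_inr h2
    have hside : ∀ (i j : Fin k) (t : ℕ), t ≤ ℓ → (g i t).isLeft = (g j t).isLeft := by
      intro i j t ht
      by_cases hij : i = j
      · rw [hij]
      have hd := hdist i j hij t ht
      by_contra hcontra
      have hadj : (completeBipartiteGraph (Fin r) (Fin s)).Adj (g i t) (g j t) := by
        rcases hx : g i t with a | a <;> rcases hy : g j t with b | b <;>
          simp_all [completeBipartiteGraph]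
      rw [← SimpleGraph.dist_eq_one_iff_adj] at hadj
      omega
    have hne : ∀ (i j : Fin k), i ≠ j → ∀ t ≤ ℓ, g i t ≠ g j t := by
      intro i j hij t ht heq
      have := hdist i j hij t ht
      rw [heq, SimpleGraph.dist_self] at this
      omega
    have key : ∃ T ≤ ℓ, ∀ i : Fin k, (g i T).isLeft := by
      by_cases h0 : (g ⟨0, hk1⟩ 0).isLeft
      · exact ⟨0, by omega, fun i => by rw [hside i ⟨0, hk1⟩ 0 (by omega)]; exact h0⟩
      · refine ⟨1, hℓ, fun i => ?_⟩
        have hi0 : ¬ (g i 0).isLeft = true := by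
          rw [hside i ⟨0, hk1⟩ 0 (by omega)]; exact h0
        have hadj := hwalk i 0 hℓ
        rcases h1 : g i 0 with a | a
        · exact absurd (by rw [h1]; rfl) hi0
        · rw [h1] at hadj
          rcases h2 : g i 1 with b | b
          · rfl
          · rw [h2] at hadj
            simp [completeBipartiteGraph] at hadj
    obtain ⟨T, hT, hTleft⟩ := key
    have hex : ∀ i : Fin k, ∃ a : Fin r, g i T = Sum.inl a := by
      intro i
      rcases hgi : g i T with a | a
      · exact ⟨a, rfl⟩
      · have := hTleft i
        rw [hgi] at this
        simp at this
    choose F hF using hex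
    have hFinj : Function.Injective F := by
      intro i j hFij
      by_contra hij
      exact hne i j hij T hT (by rw [hF i, hF j, hFij])
    have hcard := Fintype.card_le_of_injective F hFinj
    simp only [Fintype.card_fin] at hcard
    omega
end

section
/- Every connected graph G on n vertices is strong-topfull: there exist ℓ ≥ 0 and weak walks f₁,...,f_n : {0,...,ℓ} → V(G), each surjective onto V(G), such that f_i(t) ≠ f_j(t) for all i ≠ j and all t ∈ {0,...,ℓ}. -/
/-- One weak step of all tokens: each token stays or moves along an edge. -/
private def GStep {V : Type*} (G : SimpleGraph V) (σ τ : Equiv.Perm V) : Prop :=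
  ∀ x, σ x = τ x ∨ G.Adj (σ x) (τ x)

/-- Transport token `v` along a walk `p`, one edge-swap per step. -/
private lemma transport {V : Type*} {G : SimpleGraph V} (v : V) {a w : V} (p : G.Walk a w) :
    ∀ σ : Equiv.Perm V, σ v = a →
      ∃ (L : ℕ) (F : ℕ → Equiv.Perm V), F 0 = σ ∧ (F L) v = w ∧
        ∀ t < L, GStep G (F t) (F (t + 1)) := by
  classical
  induction p with
  | nil =>
    intro σ hσ
    exact ⟨0, fun _ => σ, rfl, hσ, fun t ht => absurd ht (Nat.not_lt_zero t)⟩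
  | @cons a b w hab q ih =>
    intro σ hσ
    set σ' : Equiv.Perm V := σ.trans (Equiv.swap a b) with hσ'
    have hσ'v : σ' v = b := by
      simp [hσ', Equiv.trans_apply, hσ, Equiv.swap_apply_left]
    have step1 : GStep G σ σ' := by
      intro x
      simp only [hσ', Equiv.trans_apply]
      rcases eq_or_ne (σ x) a with h1 | h1
      · rw [h1, Equiv.swap_apply_left]; exact Or.inr hab
      rcases eq_or_ne (σ x) b with h2 | h2
      · rw [h2, Equiv.swap_apply_right]; exact Or.inr hab.symm
      · rw [Equiv.swap_apply_of_ne_of_ne h1 h2]; exact Or.inl rfl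
    obtain ⟨L, F, hF0, hFL, hstep⟩ := ih σ' hσ'v
    refine ⟨L + 1, fun t => if t = 0 then σ else F (t - 1), by simp, ?_, ?_⟩
    · simpa using hFL
    · intro t ht
      rcases Nat.eq_zero_or_pos t with rfl | hpos
      · simpa [hF0] using step1
      · have h1 : t ≠ 0 := hpos.ne'
        have h2 : t + 1 ≠ 0 := by omega
        simp only [h1, h2, if_neg, ite_false]
        have : t + 1 - 1 = (t - 1) + 1 := by omega
        rw [this]
        exact hstep (t - 1) (by omega)

/-- For any list of (token, target) pairs, there is a collision-free schedule
starting at `σ` that realizes all of them. -/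
private lemma multi {V : Type*} {G : SimpleGraph V} (hconn : G.Connected) :
    ∀ (l : List (V × V)) (σ : Equiv.Perm V),
      ∃ (L : ℕ) (F : ℕ → Equiv.Perm V), F 0 = σ ∧
        (∀ t < L, GStep G (F t) (F (t + 1))) ∧
        ∀ p ∈ l, ∃ t ≤ L, (F t) p.1 = p.2 := by
  intro l
  induction l with
  | nil =>
    exact fun σ => ⟨0, fun _ => σ, rfl, fun t ht => absurd ht (Nat.not_lt_zero t), by simp⟩
  | cons pr rest ih =>
    intro σ
    obtain ⟨q⟩ := hconn.preconnected (σ pr.1) pr.2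
    obtain ⟨L₁, F₁, hF10, hF1L, hstep1⟩ := transport pr.1 q σ rfl
    obtain ⟨L₂, F₂, hF20, hstep2, hcov2⟩ := ih (F₁ L₁)
    refine ⟨L₁ + L₂, fun t => if t ≤ L₁ then F₁ t else F₂ (t - L₁), by simp [hF10], ?_, ?_⟩
    · intro t ht
      rcases lt_trichotomy t L₁ with h | h | h
      · have h1 : t ≤ L₁ := h.le
        have h2 : t + 1 ≤ L₁ := h
        simp only [h1, h2, if_pos]
        exact hstep1 t h
      · subst h
        have h2 : ¬ (t + 1 ≤ t) := by omega
        simp only [le_refl, if_pos, h2, if_neg, ite_false, Nat.add_sub_cancel_left,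
          ← hF20]
        exact hstep2 0 (by omega)
      · have h1 : ¬ (t ≤ L₁) := by omega
        have h2 : ¬ (t + 1 ≤ L₁) := by omega
        simp only [h1, h2, ite_false]
        have : t + 1 - L₁ = (t - L₁) + 1 := by omega
        rw [this]
        exact hstep2 (t - L₁) (by omega)
    · intro p hp
      rcases List.mem_cons.mp hp with rfl | hp
      · exact ⟨L₁, by omega, by simp [hF1L]⟩
      · obtain ⟨t, ht, hFt⟩ := hcov2 p hp
        refine ⟨L₁ + t, by omega, ?_⟩
        rcases Nat.eq_zero_or_pos t with rfl | hpos
        · simpa [hF20] using hFt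
        · have h1 : ¬ (L₁ + t ≤ L₁) := by omega
          simpa [h1] using hFt

/-- Every connected graph on `n` vertices is strong-topfull: there exist `n` surjective
weak walks (indexed by the vertices) of a common length that are collision-free. -/
theorem stmt_8 {V : Type*} [Fintype V] (G : SimpleGraph V) (hconn : G.Connected) :
    ∃ (ℓ : ℕ) (f : V → ℕ → V),
      (∀ v, ∀ t < ℓ, f v t = f v (t + 1) ∨ G.Adj (f v t) (f v (t + 1))) ∧
      (∀ v w, ∃ t ≤ ℓ, f v t = w) ∧
      (∀ t ≤ ℓ, ∀ v w, v ≠ w → f v t ≠ f w t) := by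
  classical
  obtain ⟨L, F, -, hstep, hcov⟩ := multi hconn (Finset.univ : Finset (V × V)).toList 1
  refine ⟨L, fun v t => F (min t L) v, ?_, ?_, ?_⟩
  · intro v t ht
    have h1 : min t L = t := min_eq_left ht.le
    have h2 : min (t + 1) L = t + 1 := min_eq_left ht
    simp only [h1, h2]
    exact hstep t ht v
  · intro v w
    obtain ⟨t, ht, hFt⟩ := hcov (v, w) (by simp)
    exact ⟨t, ht, by simpa [min_eq_left ht] using hFt⟩
  · intro t ht v w hvw h
    exact hvw ((F (min t L)).injective h)
end

section
/- Let G be a connected graph on n ≥ 3 vertices that has a leaf (a vertex of degree 1). Then G is not direct-topfull: there is no collection of n walks f₁,...,f_n : {0,...,ℓ} → V(G) (each moving along an edge at every step), pairwise vertex-disjoint at every time, with every f_i surjective onto V(G). -/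
/-- A connected graph on at least 3 vertices with a leaf is not direct-topfull: there is no
collision-free family of `n` surjective walks, each moving along an edge at every step. -/
theorem stmt_9 {V : Type*} [Fintype V] [DecidableEq V] (G : SimpleGraph V)
    [DecidableRel G.Adj] (hconn : G.Connected) (hn : 3 ≤ Fintype.card V)
    (v : V) (hv : G.degree v = 1) :
    ¬ ∃ (ℓ : ℕ) (f : V → ℕ → V),
      (∀ u, ∀ t < ℓ, G.Adj (f u t) (f u (t + 1))) ∧
      (∀ u w, ∃ t ≤ ℓ, f u t = w) ∧
      (∀ t ≤ ℓ, ∀ u w, u ≠ w → f u t ≠ f w t) := by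
  rintro ⟨ℓ, f, hadj, hsurj, hinj⟩
  classical
  -- the unique neighbour u of v
  obtain ⟨u, hu⟩ : ∃ u, G.neighborFinset v = {u} := by
    rw [← SimpleGraph.card_neighborFinset_eq_degree] at hv
    exact Finset.card_eq_one.mp hv
  have huniq : ∀ x, G.Adj v x → x = u := by
    intro x hx
    have : x ∈ G.neighborFinset v := by
      simpa [SimpleGraph.mem_neighborFinset] using hx
    simpa [hu] using this
  have hvu : v ≠ u := by
    intro h
    have : G.Adj v u := by
      have : u ∈ G.neighborFinset v := by simp [hu]
      simpa [SimpleGraph.mem_neighborFinset] using this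
    exact G.irrefl (h ▸ this)
  -- at each time t ≤ ℓ someone occupies v
  have hocc : ∀ t ≤ ℓ, ∃ p, f p t = v := by
    intro t ht
    have hinj' : Function.Injective (fun p => f p t) := by
      intro a b hab
      by_contra hne
      exact hinj t ht a b hne hab
    exact Finite.injective_iff_surjective.mp hinj' v
  -- choice of occupant of v at time t
  set g : ℕ → V := fun t => if h : ∃ p, f p t = v then h.choose else v with hg
  have hgv : ∀ t ≤ ℓ, f (g t) t = v := by
    intro t ht
    have h := hocc t ht
    simp only [hg, dif_pos h]
    exact h.choose_spec
  -- lemma A: the occupant of v at time t is at u at time t+1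
  have hA : ∀ t, t + 1 ≤ ℓ → f (g t) (t + 1) = u := by
    intro t ht
    have hadj' := hadj (g t) t (by omega)
    rw [hgv t (by omega)] at hadj'
    exact huniq _ hadj'
  -- lemma B: the occupant of v at time t+1 was at u at time t
  have hB : ∀ t, t + 1 ≤ ℓ → f (g (t + 1)) t = u := by
    intro t ht
    have hadj' := hadj (g (t + 1)) t (by omega)
    rw [hgv (t + 1) ht] at hadj'
    exact huniq _ hadj'.symm
  -- lemma C: occupants alternate with period 2
  have hC : ∀ t, t + 2 ≤ ℓ → g (t + 2) = g t := by
    intro t ht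
    have h1 : f (g t) (t + 1) = u := hA t (by omega)
    have h2 : f (g (t + 2)) (t + 1) = u := hB (t + 1) (by omega)
    by_contra hne
    exact hinj (t + 1) (by omega) _ _ hne (h2.trans h1.symm)
  have heven : ∀ k, 2 * k ≤ ℓ → g (2 * k) = g 0 := by
    intro k
    induction k with
    | zero => intro _; rfl
    | succ n ih =>
      intro hk
      have : 2 * (n + 1) = 2 * n + 2 := by ring
      rw [this, hC (2 * n) (by omega), ih (by omega)]
  -- hence player g 0 only ever visits v and u
  have hrange : ∀ t ≤ ℓ, f (g 0) t = v ∨ f (g 0) t = u := by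
    intro t ht
    rcases Nat.even_or_odd t with ⟨k, hk⟩ | ⟨k, hk⟩
    · left
      have : g t = g 0 := by rw [hk, ← two_mul]; exact heven k (by omega)
      rw [← this]; exact hgv t ht
    · right
      have hgk : g (2 * k) = g 0 := heven k (by omega)
      have := hA (2 * k) (by omega)
      rw [hgk] at this
      rw [hk]; exact this
  -- but there is a third vertex
  obtain ⟨w, hwv, hwu⟩ : ∃ w, w ≠ v ∧ w ≠ u := by
    by_contra h
    push_neg at h
    have hsub : (Finset.univ : Finset V) ⊆ {v, u} := by
      intro x _
      rcases eq_or_ne x v with hx | hx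
      · simp [hx]
      · simp [h x hx]
    have := Finset.card_le_card hsub
    have h2 : ({v, u} : Finset V).card ≤ 2 := Finset.card_insert_le _ _ |>.trans (by simp)
    simp [Finset.card_univ] at this
    omega
  obtain ⟨t, ht, hft⟩ := hsurj (g 0) w
  rcases hrange t ht with h | h
  · exact hwv (hft ▸ h)
  · exact hwu (hft ▸ h)
end

section
/- Let G be a connected graph on n vertices. If there exists ℓ ≥ 1 and walks f₁,...,f_n : {0,...,ℓ} → V(G) (each moving along an edge at every step) with f_i(t) ≠ f_j(t) for all i ≠ j and all t, then G has a vertex-disjoint cycle/edge cover: a spanning subgraph of G each of whose connected components is a cycle or a single edge. -/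
/-- `H` is a vertex-disjoint cycle/edge cover of `G`: a spanning subgraph of `G` each of
whose connected components is a cycle or a single edge `K₂`, expressed by: every vertex has
exactly two neighbours in `H` (cycle components), or exactly one neighbour `u` whose unique
neighbour is `v` back (a `K₂` component). -/
def IsCycleEdgeCover {V : Type*} (G H : SimpleGraph V) : Prop :=
  H ≤ G ∧ ∀ v : V, (H.neighborSet v).ncard = 2 ∨
    ∃ u, H.neighborSet v = {u} ∧ H.neighborSet u = {v}

/-- If a connected graph on `n` vertices admits `n` collision-free walks of a common length
`ℓ ≥ 1`, each moving along an edge at every step, then it has a vertex-disjoint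
cycle/edge cover. -/
theorem stmt_11 {V : Type*} [Fintype V] (G : SimpleGraph V) (hconn : G.Connected)
    (ℓ : ℕ) (hℓ : 1 ≤ ℓ) (f : V → ℕ → V)
    (hwalk : ∀ u, ∀ t < ℓ, G.Adj (f u t) (f u (t + 1)))
    (hcf : ∀ t ≤ ℓ, ∀ u w, u ≠ w → f u t ≠ f w t) :
    ∃ H : SimpleGraph V, IsCycleEdgeCover G H := by
  -- the maps at times 0 and 1 are injective, hence bijective
  have hinj : ∀ t ≤ ℓ, Function.Injective (fun v => f v t) := by
    intro t ht u w h
    by_contra hne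
    exact hcf t ht u w hne h
  have hbij0 : Function.Bijective (fun v => f v 0) :=
    (Finite.injective_iff_bijective).1 (hinj 0 (Nat.zero_le _))
  have hbij1 : Function.Bijective (fun v => f v 1) :=
    (Finite.injective_iff_bijective).1 (hinj 1 hℓ)
  let e0 : V ≃ V := Equiv.ofBijective _ hbij0
  let e1 : V ≃ V := Equiv.ofBijective _ hbij1
  let σ : V ≃ V := e0.symm.trans e1
  have hadj : ∀ x, G.Adj x (σ x) := by
    intro x
    have h0 : f (e0.symm x) 0 = x := e0.apply_symm_apply x
    have := hwalk (e0.symm x) 0 (by omega)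
    rw [h0] at this
    exact this
  have hne : ∀ x, σ x ≠ x := fun x => fun h => (G.irrefl (h ▸ hadj x))
  refine ⟨SimpleGraph.fromRel (fun x y => σ x = y), ?_, ?_⟩
  · intro x y h
    rcases h with ⟨hxy, h | h⟩
    · exact h ▸ hadj x
    · exact (h ▸ hadj y).symm
  · intro v
    have hset : (SimpleGraph.fromRel (fun x y => σ x = y)).neighborSet v
        = {σ v, σ.symm v} := by
      ext x
      simp only [SimpleGraph.neighborSet, SimpleGraph.fromRel_adj, Set.mem_setOf_eq,
        Set.mem_insert_iff, Set.mem_singleton_iff]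
      constructor
      · rintro ⟨hvx, h | h⟩
        · left; exact h.symm
        · right; rw [← h]; exact (σ.symm_apply_apply x).symm
      · rintro (h | h)
        · exact ⟨fun hh => hne v (hh ▸ h.symm), Or.inl h.symm⟩
        · refine ⟨?_, Or.inr (h ▸ σ.apply_symm_apply v)⟩
          intro hh
          exact hne v (σ.eq_symm_apply.1 (hh.trans h))
    by_cases hc : σ v = σ.symm v
    · right
      refine ⟨σ v, ?_, ?_⟩
      · rw [hset, ← hc]; simp
      · have hσσ : σ (σ v) = v := by rw [hc, σ.apply_symm_apply]
        have hsym : σ.symm (σ v) = v := σ.symm_apply_apply v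
        have : (SimpleGraph.fromRel (fun x y => σ x = y)).neighborSet (σ v)
            = {σ (σ v), σ.symm (σ v)} := by
          ext x
          simp only [SimpleGraph.neighborSet, SimpleGraph.fromRel_adj, Set.mem_setOf_eq,
            Set.mem_insert_iff, Set.mem_singleton_iff]
          constructor
          · rintro ⟨hvx, h | h⟩
            · left; exact h.symm
            · right; rw [← h]; exact (σ.symm_apply_apply x).symm
          · rintro (h | h)
            · exact ⟨fun hh => hne (σ v) (hh ▸ h.symm), Or.inl h.symm⟩
            · refine ⟨?_, Or.inr (h ▸ σ.apply_symm_apply (σ v))⟩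
              intro hh
              exact hne (σ v) (σ.eq_symm_apply.1 (hh.trans h))
        rw [this, hσσ, hsym]; simp
    · left
      rw [hset, Set.ncard_pair hc]
end

section
/- A connected graph G on n vertices is direct-topfull (i.e., there exist ℓ and n pairwise collision-free surjective walks f₁,...,f_n on G, each moving along an edge at every step) if and only if for any two vertices u, v ∈ V(G) there exists a u,v-path P in G such that every edge of P belongs to a subgraph of some vertex-disjoint cycle/edge cover of G. -/
/-- `G` (on vertex set `V`, one player per vertex) is direct-topfull: there is a common
length `ℓ` and a collision-free family of surjective walks, one per vertex, each moving
along an edge at every step. -/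
def DirectTopfull {V : Type*} (G : SimpleGraph V) : Prop :=
  ∃ (ℓ : ℕ) (f : V → ℕ → V),
    (∀ u, ∀ t < ℓ, G.Adj (f u t) (f u (t + 1))) ∧
    (∀ u w, ∃ t ≤ ℓ, f u t = w) ∧
    (∀ t ≤ ℓ, ∀ u w, u ≠ w → f u t ≠ f w t)

namespace CEC

variable {V : Type*}

variable {V : Type*}

/-- product of the first `t` permutations, earliest applied first -/
def pprod (s : ℕ → Equiv.Perm V) : ℕ → Equiv.Perm V
  | 0 => 1
  | t + 1 => s t * pprod s t

@[simp] lemma pprod_zero (s : ℕ → Equiv.Perm V) : pprod s 0 = 1 := rfl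
@[simp] lemma pprod_succ (s : ℕ → Equiv.Perm V) (t : ℕ) :
    pprod s (t + 1) = s t * pprod s t := rfl

lemma pprod_congr {s s' : ℕ → Equiv.Perm V} {t : ℕ} (h : ∀ i < t, s i = s' i) :
    pprod s t = pprod s' t := by
  induction t with
  | zero => rfl
  | succ t ih =>
      simp only [pprod_succ, h t (Nat.lt_succ_self t),
        ih (fun i hi => h i (Nat.lt_succ_of_lt hi))]

/-- concatenation of permutation schedules -/
def appendS (m : ℕ) (s s' : ℕ → Equiv.Perm V) : ℕ → Equiv.Perm V :=
  fun i => if i < m then s i else s' (i - m)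

lemma pprod_appendS (m : ℕ) (s s' : ℕ → Equiv.Perm V) (t : ℕ) :
    pprod (appendS m s s') (m + t) = pprod s' t * pprod s m := by
  induction t with
  | zero =>
      simp only [Nat.add_zero, pprod_zero, one_mul]
      exact pprod_congr (fun i hi => by simp [appendS, hi])
  | succ t ih =>
      have : m + (t + 1) = (m + t) + 1 := rfl
      rw [this, pprod_succ, ih, pprod_succ]
      have h1 : appendS m s s' (m + t) = s' t := by
        simp [appendS, Nat.add_sub_cancel_left]
      rw [h1, mul_assoc]

/-- graph induced by a fixed-point-free permutation -/
def permGraph (σ : Equiv.Perm V) : SimpleGraph V where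
  Adj a b := a ≠ b ∧ (σ a = b ∨ σ b = a)
  symm := ⟨by
    rintro a b ⟨h, h'⟩
    exact ⟨h.symm, h'.symm⟩⟩
  loopless := ⟨fun a h => h.1 rfl⟩

lemma permGraph_neighborSet (σ : Equiv.Perm V) (hσ : ∀ v, σ v ≠ v) (v : V) :
    (permGraph σ).neighborSet v = {σ v, σ.symm v} := by
  ext w
  simp only [SimpleGraph.mem_neighborSet, permGraph, Set.mem_insert_iff,
    Set.mem_singleton_iff, SimpleGraph.Adj]
  constructor
  · rintro ⟨hne, h | h⟩
    · exact Or.inl h.symm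
    · exact Or.inr (by rw [← h]; simp)
  · rintro (rfl | rfl)
    · exact ⟨(hσ v).symm, Or.inl rfl⟩
    · refine ⟨fun h => hσ v ?_, Or.inr (by simp)⟩
      conv_lhs => rw [h]
      simp
lemma permGraph_cover {G : SimpleGraph V} {σ : Equiv.Perm V}
    (h : ∀ v, G.Adj v (σ v)) : IsCycleEdgeCover G (permGraph σ) := by
  have hσ : ∀ v, σ v ≠ v := fun v => (h v).ne'
  constructor
  · rintro a b ⟨hne, hab | hab⟩
    · exact hab ▸ h a
    · exact (hab ▸ h b).symm
  · intro v
    by_cases hc : σ v = σ.symm v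
    · refine Or.inr ⟨σ v, ?_, ?_⟩
      · rw [permGraph_neighborSet σ hσ, ← hc, Set.pair_eq_singleton]
      · rw [permGraph_neighborSet σ hσ]
        have h1 : σ.symm (σ v) = v := σ.symm_apply_apply v
        have h2 : σ (σ v) = v := by
          conv_lhs => rw [hc]
          simp
        rw [h1, h2, Set.pair_eq_singleton]
    · left
      rw [permGraph_neighborSet σ hσ]
      exact Set.ncard_pair hc

lemma permGraph_edge {σ : Equiv.Perm V} (hσ : ∀ v, σ v ≠ v) (v : V) :
    s(v, σ v) ∈ (permGraph σ).edgeSet := by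
  rw [SimpleGraph.mem_edgeSet]
  exact ⟨(hσ v).symm, Or.inl rfl⟩



lemma permGraph_cover' {G : SimpleGraph V} (σ : Equiv.Perm V)
    (h : ∀ v, G.Adj v (σ v)) :
    ∃ H : SimpleGraph V, IsCycleEdgeCover G H ∧ ∀ v, s(v, σ v) ∈ H.edgeSet :=
  ⟨permGraph σ, permGraph_cover h, fun v => permGraph_edge (fun v => (h v).ne') v⟩


lemma exists_orientation [Fintype V] (H : SimpleGraph V)
    (hH : ∀ v : V, (H.neighborSet v).ncard = 2 ∨
      ∃ u, H.neighborSet v = {u} ∧ H.neighborSet u = {v})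
    {x y : V} (hxy : H.Adj x y) :
    ∃ σ : Equiv.Perm V, σ x = y ∧ ∀ v, H.Adj v (σ v) := by
  classical
  set A : V → Prop := fun v => ∃ u, H.neighborSet v = {u} ∧ H.neighborSet u = {v} with hA
  have hcard : ∀ v, (H.neighborSet v).ncard = (H.neighborFinset v).card := by
    intro v
    rw [SimpleGraph.neighborFinset_def, Set.ncard_eq_toFinset_card']
  have hB : ∀ v, ¬ A v → (H.neighborFinset v).card = 2 := by
    intro v hv
    rcases hH v with h | h
    · rw [← hcard]; exact h
    · exact absurd h hv
  set partner : V → V := fun v => if h : A v then Classical.choose h else v with hpartner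
  have hpart : ∀ v, A v → H.neighborSet v = {partner v} ∧ H.neighborSet (partner v) = {v} := by
    intro v hv
    simp only [hpartner, dif_pos hv]
    exact Classical.choose_spec hv
  have hApart : ∀ v, A v → A (partner v) := by
    intro v hv
    exact ⟨v, (hpart v hv).2, (hpart v hv).1⟩
  have hpp : ∀ v, A v → partner (partner v) = v := by
    intro v hv
    have h1 := (hpart (partner v) (hApart v hv)).1
    have h2 := (hpart v hv).2
    rw [h1] at h2
    exact (Set.singleton_eq_singleton_iff.mp h2)
  have cross : ∀ v w, ¬ A v → H.Adj v w → ¬ A w := by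
    intro v w hv hadj hw
    obtain ⟨u, hu1, hu2⟩ := hw
    have hvmem : v ∈ H.neighborSet w := hadj.symm
    rw [hu1] at hvmem
    rcases hvmem with rfl
    have : (H.neighborSet v).ncard = 1 := by rw [hu2]; exact Set.ncard_singleton w
    rw [hcard, hB v hv] at this
    omega
  -- the constraint sets
  set t : V → Finset V := fun v => if v = x then {y} else H.neighborFinset v with ht
  have htsub : ∀ v, t v ⊆ H.neighborFinset v := by
    intro v
    simp only [ht]
    split
    · rename_i h; subst h
      intro u hu
      rw [Finset.mem_singleton] at hu; subst hu
      exact (SimpleGraph.mem_neighborFinset _ _ _).mpr hxy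
    · exact subset_rfl
  have hxApart : A x → partner x = y := by
    intro hAx
    have := (hpart x hAx).1
    have hy : y ∈ H.neighborSet x := hxy
    rw [this, Set.mem_singleton_iff] at hy
    exact hy.symm
  have htA : ∀ v, A v → partner v ∈ t v := by
    intro v hv
    simp only [ht]
    split
    · rename_i h; subst h
      simp [hxApart hv]
    · rw [SimpleGraph.mem_neighborFinset]
      have : partner v ∈ H.neighborSet v := by rw [(hpart v hv).1]; rfl
      exact this
  have htcard : ∀ v, ¬ A v → v ≠ x → (t v).card = 2 := by
    intro v hv hvx
    simp only [ht, if_neg hvx]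
    exact hB v hv
  -- Hall's condition
  have hall : ∀ S : Finset V, S.card ≤ (S.biUnion t).card := by
    intro S
    set SA := S.filter A with hSA
    set SB := S.filter (fun v => ¬ A v) with hSB
    set T := S.biUnion t with hT
    set TA := SA.image partner with hTA
    set TB := SB.biUnion t with hTB
    have hTAsub : TA ⊆ T := by
      intro u hu
      rw [hTA, Finset.mem_image] at hu
      obtain ⟨v, hv, rfl⟩ := hu
      rw [hSA, Finset.mem_filter] at hv
      exact Finset.mem_biUnion.mpr ⟨v, hv.1, htA v hv.2⟩
    have hTBsub : TB ⊆ T := by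
      apply Finset.biUnion_subset_biUnion_of_subset_left
      exact Finset.filter_subset _ _
    have hTBB : ∀ u ∈ TB, ¬ A u := by
      intro u hu
      rw [hTB, Finset.mem_biUnion] at hu
      obtain ⟨w, hw, hu⟩ := hu
      rw [hSB, Finset.mem_filter] at hw
      have hadj : H.Adj w u := (SimpleGraph.mem_neighborFinset _ _ _).mp (htsub w hu)
      exact cross w u hw.2 hadj
    have hdisj : Disjoint TA TB := by
      rw [Finset.disjoint_left]
      intro u hu hu'
      rw [hTA, Finset.mem_image] at hu
      obtain ⟨v, hv, rfl⟩ := hu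
      rw [hSA, Finset.mem_filter] at hv
      exact hTBB _ hu' (hApart v hv.2)
    have hTAcard : TA.card = SA.card := by
      rw [hTA]
      apply Finset.card_image_of_injOn
      intro a ha b hb hab
      have ha' : A a := (Finset.mem_filter.mp ha).2
      have hb' : A b := (Finset.mem_filter.mp hb).2
      have := hpp a ha'
      rw [hab, hpp b hb'] at this
      exact this.symm
    -- counting for TB
    have hsum1 : ∑ v ∈ SB, (t v).card ≤ 2 * TB.card := by
      have step1 : ∀ v ∈ SB, (t v).card = (TB.filter (fun u => u ∈ t v)).card := by
        intro v hv
        congr 1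
        ext u
        simp only [Finset.mem_filter]
        constructor
        · intro hu
          exact ⟨Finset.mem_biUnion.mpr ⟨v, hv, hu⟩, hu⟩
        · exact fun h => h.2
      calc ∑ v ∈ SB, (t v).card
          = ∑ v ∈ SB, (TB.filter (fun u => u ∈ t v)).card := Finset.sum_congr rfl step1
        _ = ∑ v ∈ SB, ∑ u ∈ TB, (if u ∈ t v then 1 else 0) := by
            apply Finset.sum_congr rfl
            intro v _
            rw [Finset.card_filter]
        _ = ∑ u ∈ TB, ∑ v ∈ SB, (if u ∈ t v then 1 else 0) := Finset.sum_comm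
        _ = ∑ u ∈ TB, (SB.filter (fun v => u ∈ t v)).card := by
            apply Finset.sum_congr rfl
            intro u _
            rw [Finset.card_filter]
        _ ≤ ∑ u ∈ TB, 2 := by
            apply Finset.sum_le_sum
            intro u hu
            have hsub2 : SB.filter (fun v => u ∈ t v) ⊆ H.neighborFinset u := by
              intro v hv
              rw [Finset.mem_filter] at hv
              have : H.Adj v u := (SimpleGraph.mem_neighborFinset _ _ _).mp (htsub v hv.2)
              exact (SimpleGraph.mem_neighborFinset _ _ _).mpr this.symm
            calc (SB.filter (fun v => u ∈ t v)).card
                ≤ (H.neighborFinset u).card := Finset.card_le_card hsub2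
              _ = 2 := hB u (hTBB u hu)
        _ = 2 * TB.card := by rw [Finset.sum_const, smul_eq_mul, mul_comm]
    have hsum2 : 2 * SB.card ≤ ∑ v ∈ SB, (t v).card + 1 := by
      have step : ∀ v ∈ SB, 2 ≤ (t v).card + (if v = x then 1 else 0) := by
        intro v hv
        rw [hSB, Finset.mem_filter] at hv
        by_cases hvx : v = x
        · subst hvx
          have h1 : (t v).card = 1 := by simp [ht]
          rw [if_pos rfl, h1]
        · rw [htcard v hv.2 hvx]
          exact Nat.le_add_right 2 _
      have : 2 * SB.card = ∑ _v ∈ SB, 2 := by rw [Finset.sum_const, smul_eq_mul, mul_comm]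
      rw [this]
      calc ∑ v ∈ SB, 2
          ≤ ∑ v ∈ SB, ((t v).card + (if v = x then 1 else 0)) := Finset.sum_le_sum step
        _ = ∑ v ∈ SB, (t v).card + ∑ v ∈ SB, (if v = x then 1 else 0) := Finset.sum_add_distrib
        _ ≤ ∑ v ∈ SB, (t v).card + 1 := by
            have : ∑ v ∈ SB, (if v = x then 1 else 0) ≤ 1 := by
              rw [← Finset.card_filter]
              have : SB.filter (fun v => v = x) ⊆ {x} := by
                intro v hv
                rw [Finset.mem_filter] at hv
                simp [hv.2]
              calc (SB.filter (fun v => v = x)).card ≤ ({x} : Finset V).card :=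
                    Finset.card_le_card this
                _ = 1 := Finset.card_singleton x
            omega
    have hSBTB : SB.card ≤ TB.card := by omega
    have hScard : SA.card + SB.card = S.card := Finset.card_filter_add_card_filter_not (p := A)
    calc S.card = SA.card + SB.card := hScard.symm
      _ = TA.card + SB.card := by rw [hTAcard]
      _ ≤ TA.card + TB.card := by omega
      _ = (TA ∪ TB).card := (Finset.card_union_of_disjoint hdisj).symm
      _ ≤ T.card := Finset.card_le_card (Finset.union_subset hTAsub hTBsub)
  obtain ⟨f, hfinj, hfmem⟩ := (Finset.all_card_le_biUnion_card_iff_exists_injective t).mp hall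
  refine ⟨Equiv.ofBijective f (Finite.injective_iff_bijective.mp hfinj), ?_, ?_⟩
  · have := hfmem x
    simp only [ht, if_pos rfl, Finset.mem_singleton] at this
    simpa using this
  · intro v
    simp only [Equiv.ofBijective_apply]
    exact (SimpleGraph.mem_neighborFinset _ _ _).mp (htsub v (hfmem v))


lemma route_walk [Fintype V] {G : SimpleGraph V} :
    ∀ {a b : V} (p : G.Walk a b),
      (∀ e ∈ p.edges, ∃ H : SimpleGraph V, IsCycleEdgeCover G H ∧ e ∈ H.edgeSet) →
      ∃ (m : ℕ) (s : ℕ → Equiv.Perm V),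
        (∀ i < m, ∀ v, G.Adj v (s i v)) ∧ pprod s m a = b := by
  intro a b p
  induction p with
  | nil => exact fun _ => ⟨0, fun _ => 1, by simp, rfl⟩
  | @cons u v w h q ih =>
      intro hcov
      obtain ⟨H, hH, he⟩ := hcov s(u, v) (by simp)
      have hadj : H.Adj u v := (SimpleGraph.mem_edgeSet H).mp he
      obtain ⟨σ, hσ1, hσ2⟩ := exists_orientation H hH.2 hadj
      obtain ⟨m, s, hgood, hprod⟩ := ih (fun e he' => hcov e (by simp [he']))
      refine ⟨1 + m, appendS 1 (fun _ => σ) s, ?_, ?_⟩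
      · intro i hi x
        by_cases h1 : i < 1
        · simpa [appendS, h1] using hH.1 (hσ2 x)
        · simp only [appendS, if_neg h1]
          exact hgood (i - 1) (by omega) x
      · have h1 : pprod (fun _ => σ) 1 = σ := by simp [pprod]
        rw [pprod_appendS, h1, Equiv.Perm.mul_apply, hσ1, hprod]

lemma schedule [Fintype V] {G : SimpleGraph V}
    (route : ∀ a b : V, ∃ (m : ℕ) (s : ℕ → Equiv.Perm V),
      (∀ i < m, ∀ v, G.Adj v (s i v)) ∧ pprod s m a = b) :
    ∀ (L : List (V × V)) (c : Equiv.Perm V), ∃ (m : ℕ) (s : ℕ → Equiv.Perm V),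
      (∀ i < m, ∀ v, G.Adj v (s i v)) ∧
      ∀ pr ∈ L, ∃ t ≤ m, pprod s t (c pr.1) = pr.2 := by
  intro L
  induction L with
  | nil => exact fun _ => ⟨0, fun _ => 1, by simp, by simp⟩
  | cons pr L ih =>
      intro c
      obtain ⟨m₁, s₁, hg₁, hp₁⟩ := route (c pr.1) pr.2
      obtain ⟨m₂, s₂, hg₂, hp₂⟩ := ih (pprod s₁ m₁ * c)
      refine ⟨m₁ + m₂, appendS m₁ s₁ s₂, ?_, ?_⟩
      · intro i hi v
        by_cases h1 : i < m₁
        · simpa [appendS, h1] using hg₁ i h1 v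
        · simp only [appendS, if_neg h1]
          exact hg₂ (i - m₁) (by omega) v
      · intro q hq
        rcases List.mem_cons.mp hq with rfl | hq
        · refine ⟨m₁, Nat.le_add_right _ _, ?_⟩
          have h2 : pprod (appendS m₁ s₁ s₂) m₁ = pprod s₁ m₁ :=
            pprod_congr (fun i hi => by simp [appendS, hi])
          rw [h2, hp₁]
        · obtain ⟨t, htm, hpt⟩ := hp₂ q hq
          refine ⟨m₁ + t, by omega, ?_⟩
          rw [pprod_appendS, Equiv.Perm.mul_apply]
          exact hpt


end CEC

/-- A connected graph is direct-topfull iff any two vertices are joined by a path every edge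
of which lies in a subgraph of some vertex-disjoint cycle/edge cover. -/
theorem stmt_12 {V : Type*} [Fintype V] (G : SimpleGraph V) (hconn : G.Connected) :
    DirectTopfull G ↔
      ∀ u v : V, ∃ p : G.Walk u v, p.IsPath ∧
        ∀ e ∈ p.edges, ∃ H : SimpleGraph V, IsCycleEdgeCover G H ∧ e ∈ H.edgeSet := by
  classical
  constructor
  · rintro ⟨ℓ, f, hadj, hsurj, hinj⟩
    intro u v
    have hbij : ∀ t, t ≤ ℓ → Function.Bijective (fun w => f w t) := by
      intro t ht
      have hi : Function.Injective (fun w => f w t) := by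
        intro a b hab
        by_contra hne
        exact hinj t ht a b hne hab
      exact Finite.injective_iff_bijective.mp hi
    have hstep : ∀ i, i < ℓ →
        ∃ H, IsCycleEdgeCover G H ∧ ∀ w, s(f w i, f w (i + 1)) ∈ H.edgeSet := by
      intro i hi
      set e1 : V ≃ V := Equiv.ofBijective _ (hbij i (le_of_lt hi)) with he1
      set e2 : V ≃ V := Equiv.ofBijective _ (hbij (i + 1) hi) with he2
      set σ : Equiv.Perm V := e1.symm.trans e2 with hσdef
      have hσ : ∀ w, σ (f w i) = f w (i + 1) := by
        intro w
        have h1 : e1.symm (f w i) = w := by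
          have : e1 w = f w i := rfl
          rw [← this, Equiv.symm_apply_apply]
        simp only [hσdef, Equiv.trans_apply, h1]
        rfl
      have hgood : ∀ x, G.Adj x (σ x) := by
        intro x
        obtain ⟨w, rfl⟩ : ∃ w, f w i = x := ⟨e1.symm x, congrArg (fun z => z) (e1.apply_symm_apply x)⟩
        rw [hσ w]
        exact hadj w i hi
      obtain ⟨H, hc, hm⟩ := CEC.permGraph_cover' σ hgood
      refine ⟨H, hc, fun w => ?_⟩
      have := hm (f w i)
      rwa [hσ w] at this
    have hwalkseg : ∀ (w : V) (a b : ℕ), a ≤ b → b ≤ ℓ →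
        ∃ p : G.Walk (f w a) (f w b),
          ∀ e ∈ p.edges, ∃ i, i < ℓ ∧ e = s(f w i, f w (i + 1)) := by
      intro w a b hab
      induction b, hab using Nat.le_induction with
      | base => exact fun _ => ⟨SimpleGraph.Walk.nil, by simp⟩
      | succ b hab ih =>
          intro hb
          obtain ⟨p, hp⟩ := ih (by omega)
          refine ⟨p.concat (hadj w b (by omega)), ?_⟩
          intro e he
          rw [SimpleGraph.Walk.edges_concat, List.concat_eq_append, List.mem_append, List.mem_singleton] at he
          rcases he with he | he
          · exact hp e he
          · exact ⟨b, by omega, he⟩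
    have main : ∃ q : G.Walk u v, ∀ e ∈ q.edges, ∃ i, i < ℓ ∧ e = s(f u i, f u (i + 1)) := by
      obtain ⟨t₁, ht₁l, ht₁⟩ := hsurj u u
      obtain ⟨t₂, ht₂l, ht₂⟩ := hsurj u v
      rcases le_or_gt t₁ t₂ with h | h
      · obtain ⟨p, hp⟩ := hwalkseg u t₁ t₂ h ht₂l
        exact ⟨p.copy ht₁ ht₂, by simpa [SimpleGraph.Walk.edges_copy] using hp⟩
      · obtain ⟨p, hp⟩ := hwalkseg u t₂ t₁ (le_of_lt h) ht₁l
        refine ⟨(p.copy ht₂ ht₁).reverse, ?_⟩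
        intro e he
        rw [SimpleGraph.Walk.edges_reverse, List.mem_reverse,
          SimpleGraph.Walk.edges_copy] at he
        exact hp e he
    obtain ⟨q, hq⟩ := main
    refine ⟨q.bypass, SimpleGraph.Walk.bypass_isPath q, ?_⟩
    intro e he
    obtain ⟨i, hi, rfl⟩ := hq e (q.edges_bypass_subset he)
    obtain ⟨H, hc, hme⟩ := hstep i hi
    exact ⟨H, hc, hme u⟩
  · intro hyp
    have route : ∀ a b : V, ∃ (m : ℕ) (s : ℕ → Equiv.Perm V),
        (∀ i < m, ∀ v, G.Adj v (s i v)) ∧ CEC.pprod s m a = b := by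
      intro a b
      obtain ⟨p, _, hp⟩ := hyp a b
      exact CEC.route_walk p hp
    obtain ⟨m, s, hgood, hvisit⟩ :=
      CEC.schedule route (Finset.univ : Finset (V × V)).toList 1
    refine ⟨m, fun u t => CEC.pprod s t u, ?_, ?_, ?_⟩
    · intro u t ht
      show G.Adj (CEC.pprod s t u) (CEC.pprod s (t + 1) u)
      have h1 : CEC.pprod s (t + 1) u = s t (CEC.pprod s t u) := rfl
      rw [h1]
      exact hgood t ht _
    · intro u w
      obtain ⟨t, htm, hpt⟩ := hvisit (u, w) (by simp [Finset.mem_toList])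
      exact ⟨t, htm, by simpa using hpt⟩
    · intro t ht u w huw h
      exact huw ((CEC.pprod s t).injective h)
end

section
/- Every connected bridgeless cubic graph is direct-topfull. -/
set_option linter.unusedSectionVars false

namespace StmtAux

open Finset

variable {V : Type*} [Fintype V] [DecidableEq V] (G : SimpleGraph V) [DecidableRel G.Adj]

/-- double counting -/
lemma count_aux (s T : Finset V) (hsub : ∀ v ∈ s, G.neighborFinset v ⊆ T) :
    ∑ v ∈ s, G.degree v = ∑ u ∈ T, (G.neighborFinset u ∩ s).card := by
  have h1 : ∀ v ∈ s, G.degree v = ∑ u ∈ T, if G.Adj v u then 1 else 0 := by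
    intro v hv
    rw [← SimpleGraph.card_neighborFinset_eq_degree]
    have : G.neighborFinset v = T.filter (fun u => G.Adj v u) := by
      ext u
      simp only [SimpleGraph.mem_neighborFinset, Finset.mem_filter]
      exact ⟨fun h => ⟨hsub v hv (by simpa using h), h⟩, fun h => h.2⟩
    rw [this, Finset.card_filter]
  rw [Finset.sum_congr rfl h1, Finset.sum_comm]
  apply Finset.sum_congr rfl
  intro u _
  have : G.neighborFinset u ∩ s = s.filter (fun v => G.Adj u v) := by
    ext v; simp [SimpleGraph.mem_neighborFinset, and_comm]
  rw [this, Finset.card_filter]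
  apply Finset.sum_congr rfl
  intro v _
  simp [G.adj_comm u v]

lemma exists_good_perm (hcubic : ∀ v : V, G.degree v = 3) {a b : V} (hab : G.Adj a b) :
    ∃ σ : Equiv.Perm V, σ a = b ∧ ∀ v, G.Adj v (σ v) := by
  classical
  set t : V → Finset V := fun v => if v = a then {b} else G.neighborFinset v with ht
  have hall : ∀ s : Finset V, s.card ≤ (s.biUnion t).card := by
    intro s
    set T := s.biUnion t with hT
    by_cases ha : a ∈ s
    · -- case a ∈ s
      set s' := s.erase a with hs'
      have hsub : ∀ v ∈ s', G.neighborFinset v ⊆ T := by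
        intro v hv u hu
        rw [hT, Finset.mem_biUnion]
        refine ⟨v, Finset.mem_of_mem_erase hv, ?_⟩
        rw [ht]; simp only []
        rw [if_neg (Finset.ne_of_mem_erase hv)]
        exact hu
      have hb : b ∈ T := by
        rw [hT, Finset.mem_biUnion]
        exact ⟨a, ha, by simp [ht]⟩
      have hcount := count_aux G s' T hsub
      have hdeg : ∑ v ∈ s', G.degree v = 3 * s'.card := by
        rw [Finset.sum_congr rfl (fun v _ => hcubic v)]
        simp [mul_comm]
      have hbb : (G.neighborFinset b ∩ s').card ≤ 2 := by
        have hsubb : G.neighborFinset b ∩ s' ⊆ (G.neighborFinset b).erase a := by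
          intro x hx
          rw [Finset.mem_inter] at hx
          refine Finset.mem_erase.mpr ⟨?_, hx.1⟩
          intro h
          rw [h] at hx
          exact Finset.notMem_erase a s hx.2
        calc (G.neighborFinset b ∩ s').card ≤ ((G.neighborFinset b).erase a).card :=
              Finset.card_le_card hsubb
          _ = G.degree b - 1 := by
              rw [Finset.card_erase_of_mem (by simpa [SimpleGraph.mem_neighborFinset] using hab.symm)]
              rw [SimpleGraph.card_neighborFinset_eq_degree]
          _ ≤ 2 := by rw [hcubic b]
      have hTsum : ∑ u ∈ T, (G.neighborFinset u ∩ s').card ≤ 2 + 3 * (T.card - 1) := by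
        rw [← Finset.add_sum_erase T _ hb]
        have h2 : ∑ u ∈ T.erase b, (G.neighborFinset u ∩ s').card ≤ 3 * (T.card - 1) := by
          calc ∑ u ∈ T.erase b, (G.neighborFinset u ∩ s').card
              ≤ ∑ u ∈ T.erase b, 3 := by
                apply Finset.sum_le_sum
                intro u _
                calc (G.neighborFinset u ∩ s').card ≤ (G.neighborFinset u).card :=
                      Finset.card_le_card (Finset.inter_subset_left)
                  _ = 3 := by rw [SimpleGraph.card_neighborFinset_eq_degree, hcubic]
            _ = 3 * (T.card - 1) := by
                rw [Finset.sum_const, Finset.card_erase_of_mem hb]; ring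
        omega
      have hc1 : s'.card = s.card - 1 := Finset.card_erase_of_mem ha
      have hc2 : 1 ≤ s.card := Finset.card_pos.mpr ⟨a, ha⟩
      have hc3 : 1 ≤ T.card := Finset.card_pos.mpr ⟨b, hb⟩
      rw [hdeg] at hcount
      omega
    · -- case a ∉ s
      have hsub : ∀ v ∈ s, G.neighborFinset v ⊆ T := by
        intro v hv u hu
        rw [hT, Finset.mem_biUnion]
        refine ⟨v, hv, ?_⟩
        rw [ht]; simp only []
        rw [if_neg (by rintro rfl; exact ha hv)]
        exact hu
      have hcount := count_aux G s T hsub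
      have hdeg : ∑ v ∈ s, G.degree v = 3 * s.card := by
        rw [Finset.sum_congr rfl (fun v _ => hcubic v)]
        simp [mul_comm]
      have hTsum : ∑ u ∈ T, (G.neighborFinset u ∩ s).card ≤ 3 * T.card := by
        calc ∑ u ∈ T, (G.neighborFinset u ∩ s).card ≤ ∑ u ∈ T, 3 := by
              apply Finset.sum_le_sum
              intro u _
              calc (G.neighborFinset u ∩ s).card ≤ (G.neighborFinset u).card :=
                    Finset.card_le_card (Finset.inter_subset_left)
                _ = 3 := by rw [SimpleGraph.card_neighborFinset_eq_degree, hcubic]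
          _ = 3 * T.card := by rw [Finset.sum_const]; ring
      rw [hdeg] at hcount
      omega
  obtain ⟨f, hinj, hmem⟩ := (Finset.all_card_le_biUnion_card_iff_exists_injective t).mp hall
  have hbij : Function.Bijective f := Finite.injective_iff_bijective.mp hinj
  refine ⟨Equiv.ofBijective f hbij, ?_, ?_⟩
  · have := hmem a
    simp only [ht, if_pos rfl, Finset.mem_singleton] at this
    simpa using this
  · intro v
    have := hmem v
    by_cases hv : v = a
    · subst hv
      simp only [ht, if_pos rfl, Finset.mem_singleton] at this
      simpa [this] using hab
    · simp only [ht, if_neg hv, SimpleGraph.mem_neighborFinset] at this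
      simpa using this

/-- apply a list of permutations in order -/
def appList (L : List (Equiv.Perm V)) (x : V) : V := L.foldl (fun x σ => σ x) x

lemma appList_nil (x : V) : appList ([] : List (Equiv.Perm V)) x = x := rfl

lemma appList_cons (σ : Equiv.Perm V) (L : List (Equiv.Perm V)) (x : V) :
    appList (σ :: L) x = appList L (σ x) := rfl

lemma appList_append (L L' : List (Equiv.Perm V)) (x : V) :
    appList (L ++ L') x = appList L' (appList L x) := List.foldl_append

lemma appList_injective (L : List (Equiv.Perm V)) : Function.Injective (appList L) := by
  induction L with
  | nil => intro x y h; simpa [appList_nil] using h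
  | cons σ L ih =>
    intro x y h
    rw [appList_cons, appList_cons] at h
    exact σ.injective (ih h)

lemma exists_word (hcubic : ∀ v : V, G.degree v = 3) {x y : V} (hr : G.Reachable x y) :
    ∃ L : List (Equiv.Perm V), (∀ σ ∈ L, ∀ v, G.Adj v (σ v)) ∧ appList L x = y := by
  obtain ⟨w⟩ := hr
  induction w with
  | nil => exact ⟨[], by simp, appList_nil _⟩
  | @cons x z y hxz p ih =>
    obtain ⟨L, hL, hLx⟩ := ih
    obtain ⟨σ, hσ1, hσ2⟩ := exists_good_perm G hcubic hxz
    refine ⟨σ :: L, ?_, ?_⟩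
    · intro τ hτ v
      rcases List.mem_cons.mp hτ with h | h
      · subst h; exact hσ2 v
      · exact hL τ h v
    · rw [appList_cons, hσ1, hLx]

lemma word_for_pairs (hcubic : ∀ v : V, G.degree v = 3) (hconn : G.Connected) :
    ∀ P : List (V × V),
      ∃ L : List (Equiv.Perm V), (∀ σ ∈ L, ∀ v, G.Adj v (σ v)) ∧
        ∀ p ∈ P, ∃ t ≤ L.length, appList (L.take t) p.1 = p.2 := by
  intro P
  induction P with
  | nil => exact ⟨[], by simp, by simp⟩
  | cons q P ih =>
    obtain ⟨L, hL, hP⟩ := ih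
    obtain ⟨L', hL', hLx⟩ := exists_word G hcubic (hconn (appList L q.1) q.2)
    refine ⟨L ++ L', ?_, ?_⟩
    · intro σ hσ v
      rcases List.mem_append.mp hσ with h | h
      · exact hL σ h v
      · exact hL' σ h v
    · intro p hp
      rcases List.mem_cons.mp hp with h | h
      · subst h
        refine ⟨(L ++ L').length, le_refl _, ?_⟩
        rw [List.take_length, appList_append, hLx]
      · obtain ⟨t, ht, hte⟩ := hP p h
        refine ⟨t, ?_, ?_⟩
        · rw [List.length_append]; omega
        · rw [List.take_append_of_le_length ht, hte]

end StmtAux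

open StmtAux in
/-- Every connected bridgeless cubic graph is direct-topfull. -/
theorem stmt_14 {V : Type*} [Fintype V] [DecidableEq V] (G : SimpleGraph V)
    [DecidableRel G.Adj] (hconn : G.Connected)
    (hbridgeless : ∀ e ∈ G.edgeSet, ¬ G.IsBridge e)
    (hcubic : ∀ v : V, G.degree v = 3) :
    DirectTopfull G := by
  classical
  obtain ⟨L, hL, hP⟩ := word_for_pairs G hcubic hconn
    ((Finset.univ ×ˢ Finset.univ : Finset (V × V)).toList)
  refine ⟨L.length, fun u t => appList (L.take t) u, ?_, ?_, ?_⟩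
  · intro u t ht
    have hget : L.take (t + 1) = L.take t ++ [L.get ⟨t, ht⟩] := by
      rw [List.take_succ]
      congr
      simp [List.getElem?_eq_getElem ht]
    simp only []
    rw [hget, appList_append, appList_cons, appList_nil]
    exact hL _ (List.get_mem L ⟨t, ht⟩) _
  · intro u w
    have hmem : (u, w) ∈ (Finset.univ ×ˢ Finset.univ : Finset (V × V)).toList := by
      rw [Finset.mem_toList, Finset.mem_product]
      exact ⟨Finset.mem_univ u, Finset.mem_univ w⟩
    exact hP (u, w) hmem
  · intro t _ u w huw h
    exact huw (appList_injective _ h)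
end

section
/- Every connected 2k-regular graph, k ≥ 1, is direct-topfull. -/
section Aux

variable {V : Type*} [Fintype V] [DecidableEq V]

private def applyList (L : List (Equiv.Perm V)) (x : V) : V :=
  L.foldl (fun x π => π x) x

private lemma applyList_cons (π : Equiv.Perm V) (L : List (Equiv.Perm V)) (x : V) :
    applyList (π :: L) x = applyList L (π x) := rfl

private lemma applyList_append (L₁ L₂ : List (Equiv.Perm V)) (x : V) :
    applyList (L₁ ++ L₂) x = applyList L₂ (applyList L₁ x) := by
  induction L₁ generalizing x with
  | nil => rfl
  | cons π L ih => simp [applyList_cons, ih]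

private lemma applyList_injective (L : List (Equiv.Perm V)) :
    Function.Injective (applyList (V := V) L) := by
  induction L with
  | nil => exact fun a b h => h
  | cons π L ih =>
    intro a b h
    exact π.injective (ih h)

/-- Every edge of a `2k`-regular graph extends to a permutation moving every vertex
along an edge (a perfect matching in the bipartite adjacency graph, by Hall). -/
private lemma exists_edge_perm (G : SimpleGraph V) [DecidableRel G.Adj]
    (k : ℕ) (hk : 1 ≤ k) (hreg : G.IsRegularOfDegree (2 * k))
    {a b : V} (hab : G.Adj a b) :
    ∃ π : Equiv.Perm V, (∀ v, G.Adj v (π v)) ∧ π a = b := by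
  classical
  set t : V → Finset V := fun u => if u = a then {b} else G.neighborFinset u \ {b} with ht
  have hall : ∀ s : Finset V, s.card ≤ (s.biUnion t).card := by
    intro s
    set s' : Finset V := s.erase a with hs'
    set T : Finset V := s.biUnion t with hT
    set T' : Finset V := s'.biUnion t with hT'
    -- key counting: 2k * |s'| ≤ 2k * |T'| + (2k - 1)
    have hmem_s' : ∀ u ∈ s', t u = G.neighborFinset u \ {b} := by
      intro u hu
      have : u ≠ a := Finset.ne_of_mem_erase hu
      simp [ht, this]
    have hcard_t : ∀ u ∈ s',
        (t u).card + (if G.Adj u b then 1 else 0) = 2 * k := by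
      intro u hu
      rw [hmem_s' u hu, Finset.sdiff_singleton_eq_erase]
      by_cases h : G.Adj u b
      · have hbmem : b ∈ G.neighborFinset u := by
          rw [SimpleGraph.mem_neighborFinset]; exact h
        rw [if_pos h, Finset.card_erase_add_one hbmem]
        exact hreg u
      · have hbmem : b ∉ G.neighborFinset u := by
          rw [SimpleGraph.mem_neighborFinset]; exact h
        rw [if_neg h, Finset.erase_eq_of_notMem hbmem, add_zero]
        exact hreg u
    -- double counting
    have hsub : ∀ u ∈ s', t u ⊆ T' := fun u hu => Finset.subset_biUnion_of_mem t hu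
    have hswap : ∑ u ∈ s', (t u).card
        = ∑ w ∈ T', (s'.filter (fun u => w ∈ t u)).card := by
      have h1 : ∀ u ∈ s', (t u).card = ∑ w ∈ T', (if w ∈ t u then 1 else 0) := by
        intro u hu
        rw [← Finset.card_filter]
        congr 1
        rw [Finset.filter_mem_eq_inter]
        exact (Finset.inter_eq_right.mpr (hsub u hu)).symm
      rw [Finset.sum_congr rfl h1, Finset.sum_comm]
      refine Finset.sum_congr rfl fun w _ => ?_
      rw [Finset.card_filter]
    have hcount : ∀ w ∈ T', (s'.filter (fun u => w ∈ t u)).card ≤ 2 * k := by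
      intro w _
      have : s'.filter (fun u => w ∈ t u) ⊆ G.neighborFinset w := by
        intro u hu
        rw [Finset.mem_filter] at hu
        obtain ⟨hu1, hu2⟩ := hu
        rw [hmem_s' u hu1, Finset.mem_sdiff, SimpleGraph.mem_neighborFinset] at hu2
        rw [SimpleGraph.mem_neighborFinset]
        exact hu2.1.symm
      calc (s'.filter (fun u => w ∈ t u)).card ≤ (G.neighborFinset w).card :=
            Finset.card_le_card this
        _ = 2 * k := hreg w
    have he : (s'.filter (fun u => G.Adj u b)).card + 1 ≤ 2 * k := by
      have hsubb : s'.filter (fun u => G.Adj u b) ⊆ (G.neighborFinset b).erase a := by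
        intro u hu
        rw [Finset.mem_filter] at hu
        rw [Finset.mem_erase, SimpleGraph.mem_neighborFinset]
        exact ⟨Finset.ne_of_mem_erase hu.1, hu.2.symm⟩
      have hamem : a ∈ G.neighborFinset b := by
        rw [SimpleGraph.mem_neighborFinset]; exact hab.symm
      calc (s'.filter (fun u => G.Adj u b)).card + 1
          ≤ ((G.neighborFinset b).erase a).card + 1 :=
            Nat.add_le_add_right (Finset.card_le_card hsubb) 1
        _ = (G.neighborFinset b).card := Finset.card_erase_add_one hamem
        _ = 2 * k := hreg b
    have hkey : s'.card ≤ T'.card := by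
      have h1 : 2 * k * s'.card
          = ∑ u ∈ s', (t u).card + (s'.filter (fun u => G.Adj u b)).card := by
        rw [Finset.card_filter, ← Finset.sum_add_distrib]
        rw [Finset.sum_congr rfl hcard_t, Finset.sum_const, smul_eq_mul, mul_comm]
      have h2 : ∑ u ∈ s', (t u).card ≤ 2 * k * T'.card := by
        rw [hswap]
        calc ∑ w ∈ T', (s'.filter (fun u => w ∈ t u)).card
            ≤ ∑ _w ∈ T', 2 * k := Finset.sum_le_sum hcount
          _ = T'.card * (2 * k) := by rw [Finset.sum_const, smul_eq_mul]
          _ = 2 * k * T'.card := mul_comm _ _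
      have h3 : 2 * k * s'.card < 2 * k * (T'.card + 1) := by
        calc 2 * k * s'.card
            = ∑ u ∈ s', (t u).card + (s'.filter (fun u => G.Adj u b)).card := h1
          _ < ∑ u ∈ s', (t u).card + 2 * k := by
              have := he
              omega
          _ ≤ 2 * k * T'.card + 2 * k := Nat.add_le_add_right h2 _
          _ = 2 * k * (T'.card + 1) := by ring
      have h2k : 0 < 2 * k := by omega
      have := Nat.lt_of_mul_lt_mul_left (a := 2 * k) h3
      omega
    by_cases ha : a ∈ s
    · have hbT : b ∈ T := by
        apply Finset.mem_biUnion.mpr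
        exact ⟨a, ha, by simp [ht]⟩
      have hT'sub : T' ⊆ T.erase b := by
        intro w hw
        rw [Finset.mem_erase]
        constructor
        · rintro rfl
          obtain ⟨u, hu, hwu⟩ := Finset.mem_biUnion.mp hw
          rw [hmem_s' u hu, Finset.mem_sdiff] at hwu
          exact hwu.2 (Finset.mem_singleton_self _)
        · exact Finset.biUnion_subset_biUnion_of_subset_left t (Finset.erase_subset a s) hw
      calc s.card = s'.card + 1 := (Finset.card_erase_add_one ha).symm
        _ ≤ T'.card + 1 := Nat.add_le_add_right hkey 1
        _ ≤ (T.erase b).card + 1 := Nat.add_le_add_right (Finset.card_le_card hT'sub) 1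
        _ = T.card := Finset.card_erase_add_one hbT
    · have : s' = s := Finset.erase_eq_of_notMem ha
      rw [← this, hT, ← this]
      exact hkey
  obtain ⟨f, hfinj, hf⟩ := (Finset.all_card_le_biUnion_card_iff_exists_injective t).mp hall
  have hfbij : Function.Bijective f := (Finite.injective_iff_bijective).mp hfinj
  refine ⟨Equiv.ofBijective f hfbij, ?_, ?_⟩
  · intro v
    have := hf v
    by_cases hv : v = a
    · subst hv
      simp only [ht, if_pos rfl, Finset.mem_singleton] at this
      simpa [Equiv.ofBijective, this] using hab
    · simp only [ht, if_neg hv, Finset.mem_sdiff, SimpleGraph.mem_neighborFinset] at this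
      simpa [Equiv.ofBijective] using this.1
  · have := hf a
    simp only [ht, if_pos rfl, Finset.mem_singleton] at this
    simpa [Equiv.ofBijective] using this

private lemma exists_word (G : SimpleGraph V) [DecidableRel G.Adj]
    (k : ℕ) (hk : 1 ≤ k) (hreg : G.IsRegularOfDegree (2 * k))
    {x y : V} (h : G.Reachable x y) :
    ∃ L : List (Equiv.Perm V), (∀ π ∈ L, ∀ v, G.Adj v (π v)) ∧ applyList L x = y := by
  obtain ⟨p⟩ := h
  induction p with
  | nil => exact ⟨[], by simp, rfl⟩
  | cons hadj p ih =>
    obtain ⟨L, hL, hLxy⟩ := ih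
    obtain ⟨π, hπ, hπa⟩ := exists_edge_perm G k hk hreg hadj
    refine ⟨π :: L, ?_, ?_⟩
    · intro σ hσ v
      rcases List.mem_cons.mp hσ with h | h
      · subst h; exact hπ v
      · exact hL σ h v
    · rw [applyList_cons, hπa, hLxy]

private lemma exists_schedule (G : SimpleGraph V) [DecidableRel G.Adj]
    (hconn : G.Connected) (k : ℕ) (hk : 1 ≤ k) (hreg : G.IsRegularOfDegree (2 * k))
    (P : List (V × V)) :
    ∃ L : List (Equiv.Perm V),
      (∀ π ∈ L, ∀ v, G.Adj v (π v)) ∧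
      ∀ p ∈ P, ∃ n ≤ L.length, applyList (L.take n) p.1 = p.2 := by
  induction P with
  | nil => exact ⟨[], by simp, by simp⟩
  | cons q P ih =>
    obtain ⟨L, hL, hP⟩ := ih
    obtain ⟨W, hW, hWxy⟩ :=
      exists_word G k hk hreg (hconn.preconnected (applyList L q.1) q.2)
    refine ⟨L ++ W, ?_, ?_⟩
    · intro σ hσ v
      rcases List.mem_append.mp hσ with h | h
      · exact hL σ h v
      · exact hW σ h v
    · intro p hp
      rcases List.mem_cons.mp hp with h | h
      · subst h
        refine ⟨(L ++ W).length, le_refl _, ?_⟩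
        rw [List.take_length, applyList_append, hWxy]
      · obtain ⟨n, hn, hval⟩ := hP p h
        refine ⟨n, ?_, ?_⟩
        · calc n ≤ L.length := hn
            _ ≤ (L ++ W).length := by simp
        · rw [List.take_append_of_le_length hn, hval]

end Aux

/-- Every connected `2k`-regular graph, `k ≥ 1`, is direct-topfull. -/
theorem stmt_15 {V : Type*} [Fintype V] [DecidableEq V] (G : SimpleGraph V)
    [DecidableRel G.Adj] (hconn : G.Connected) (k : ℕ) (hk : 1 ≤ k)
    (hreg : G.IsRegularOfDegree (2 * k)) :
    DirectTopfull G := by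
  classical
  obtain ⟨L, hL, hP⟩ := exists_schedule G hconn k hk hreg
    ((Finset.univ ×ˢ Finset.univ : Finset (V × V)).toList)
  refine ⟨L.length, fun u t => applyList (L.take t) u, ?_, ?_, ?_⟩
  · intro u t ht
    show G.Adj (applyList (L.take t) u) (applyList (L.take (t + 1)) u)
    have htake : L.take (t + 1) = L.take t ++ [L[t]] := by
      have := List.take_concat_get ht
      rw [List.concat_eq_append] at this
      exact this.symm
    rw [htake, applyList_append, applyList_cons]
    exact hL _ (List.getElem_mem ht) _
  · intro u w
    have hmem : (u, w) ∈ (Finset.univ ×ˢ Finset.univ : Finset (V × V)).toList := by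
      rw [Finset.mem_toList, Finset.mem_product]
      exact ⟨Finset.mem_univ u, Finset.mem_univ w⟩
    obtain ⟨n, hn, hval⟩ := hP (u, w) hmem
    exact ⟨n, hn, hval⟩
  · intro t _ u w huw h
    exact huw (applyList_injective (L.take t) h)
end

section
/- Every elementary graph (a connected graph in which the union of all perfect matchings forms a connected spanning subgraph) on at least 2 vertices is direct-topfull. -/
section Aux

variable {V : Type*} (G : SimpleGraph V)

/-- A good step: every vertex moves along an edge, and the step is an involution. -/
def GoodStep (g : V → V) : Prop := (∀ x, G.Adj x (g x)) ∧ ∀ x, g (g x) = x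

/-- Apply a list of steps (head first). -/
def applyL (L : List (V → V)) (x : V) : V := L.foldl (fun a g => g a) x

lemma applyL_nil (x : V) : applyL ([] : List (V → V)) x = x := rfl

lemma applyL_cons (g : V → V) (L : List (V → V)) (x : V) :
    applyL (g :: L) x = applyL L (g x) := rfl

lemma applyL_singleton (g : V → V) (x : V) : applyL [g] x = g x := rfl

lemma applyL_append (L L' : List (V → V)) (x : V) :
    applyL (L ++ L') x = applyL L' (applyL L x) := by
  simp [applyL, List.foldl_append]

lemma applyL_reverse_applyL (L : List (V → V)) (hL : ∀ g ∈ L, GoodStep G g) (x : V) :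
    applyL L.reverse (applyL L x) = x := by
  induction L generalizing x with
  | nil => rfl
  | cons g L ih =>
    have hg := hL g (by simp)
    have hL' : ∀ h ∈ L, GoodStep G h := fun h hh => hL h (by simp [hh])
    rw [List.reverse_cons, applyL_cons, applyL_append, ih hL' (g x), applyL_singleton,
      hg.2]

lemma matching_invol (M : G.Subgraph) (hM : M.IsPerfectMatching) :
    ∃ g : V → V, GoodStep G g ∧ ∀ a b, M.Adj a b → g a = b := by
  rw [SimpleGraph.Subgraph.isPerfectMatching_iff] at hM
  choose g hg hg' using hM
  refine ⟨g, ⟨fun x => M.adj_sub (hg x), fun x => (hg' (g x) x (hg x).symm).symm⟩,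
    fun a b h => (hg' a b h).symm⟩

lemma route (u w : V)
    (p : (SimpleGraph.fromRel
      (fun a b => ∃ M : G.Subgraph, M.IsPerfectMatching ∧ M.Adj a b)).Walk u w) :
    ∃ L : List (V → V), (∀ g ∈ L, GoodStep G g) ∧ applyL L u = w := by
  induction p with
  | nil => exact ⟨[], by simp, rfl⟩
  | @cons a b c h p ih =>
    obtain ⟨L, hL, hend⟩ := ih
    rw [SimpleGraph.fromRel_adj] at h
    obtain ⟨hne, hrel⟩ := h
    have hM : ∃ M : G.Subgraph, M.IsPerfectMatching ∧ M.Adj a b := by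
      rcases hrel with ⟨M, hM, hadj⟩ | ⟨M, hM, hadj⟩
      · exact ⟨M, hM, hadj⟩
      · exact ⟨M, hM, hadj.symm⟩
    obtain ⟨M, hM, hadj⟩ := hM
    obtain ⟨g, hg, hgab⟩ := matching_invol G M hM
    refine ⟨g :: L, ?_, ?_⟩
    · rintro g' hg'
      rcases List.mem_cons.mp hg' with rfl | h'
      · exact hg
      · exact hL g' h'
    · rw [applyL_cons, hgab _ _ hadj, hend]

lemma segGood (u w : V)
    (p : (SimpleGraph.fromRel
      (fun a b => ∃ M : G.Subgraph, M.IsPerfectMatching ∧ M.Adj a b)).Walk u w) :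
    ∃ S : List (V → V), (∀ g ∈ S, GoodStep G g) ∧ (∀ x, applyL S x = x) ∧
      ∃ t ≤ S.length, applyL (S.take t) u = w := by
  obtain ⟨L, hL, hend⟩ := route G u w p
  refine ⟨L ++ L.reverse, ?_, ?_, L.length, ?_, ?_⟩
  · intro g hg
    rcases List.mem_append.mp hg with h | h
    · exact hL g h
    · exact hL g (List.mem_reverse.mp h)
  · intro x
    rw [applyL_append, applyL_reverse_applyL G L hL]
  · simp
  · rw [List.take_left, hend]

lemma mainlist
    (hpre : (SimpleGraph.fromRel
      (fun a b => ∃ M : G.Subgraph, M.IsPerfectMatching ∧ M.Adj a b)).Preconnected)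
    (P : List (V × V)) :
    ∃ Gl : List (V → V), (∀ g ∈ Gl, GoodStep G g) ∧ (∀ x, applyL Gl x = x) ∧
      ∀ p ∈ P, ∃ t ≤ Gl.length, applyL (Gl.take t) p.1 = p.2 := by
  induction P with
  | nil => exact ⟨[], by simp, fun x => rfl, by simp⟩
  | cons q P ih =>
    obtain ⟨Gl, hgood, hid, hvisit⟩ := ih
    obtain ⟨S, hS, hSid, t₀, ht₀, hSu⟩ := segGood G q.1 q.2 (hpre q.1 q.2).some
    refine ⟨S ++ Gl, ?_, ?_, ?_⟩
    · intro g hg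
      rcases List.mem_append.mp hg with h | h
      · exact hS g h
      · exact hgood g h
    · intro x
      rw [applyL_append, hSid, hid]
    · rintro p hp
      rcases List.mem_cons.mp hp with rfl | hp'
      · refine ⟨t₀, ?_, ?_⟩
        · calc t₀ ≤ S.length := ht₀
            _ ≤ (S ++ Gl).length := by simp
        · rw [List.take_append_of_le_length ht₀, hSu]
      · obtain ⟨t, ht, hvis⟩ := hvisit p hp'
        refine ⟨S.length + t, ?_, ?_⟩
        · simp [List.length_append]; omega
        · rw [List.take_length_add_append, applyL_append, hSid, hvis]

end Aux

/-- Every elementary graph (connected, with the union of all perfect matchings forming a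
connected spanning subgraph) on at least 2 vertices is direct-topfull. -/
theorem stmt_16 {V : Type*} [Fintype V] (G : SimpleGraph V) (hconn : G.Connected)
    (hcard : 2 ≤ Fintype.card V)
    (helem : (SimpleGraph.fromRel
      (fun a b => ∃ M : G.Subgraph, M.IsPerfectMatching ∧ M.Adj a b)).Connected) :
    DirectTopfull G := by
  classical
  obtain ⟨Gl, hgood, hid, hvisit⟩ := mainlist G helem.preconnected
    (Finset.univ : Finset (V × V)).toList
  refine ⟨Gl.length, fun u t => applyL (Gl.take t) u, ?_, ?_, ?_⟩
  · intro u t ht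
    have h1 : Gl.take (t + 1) = Gl.take t ++ [Gl[t]] := by
      rw [List.take_succ, List.getElem?_eq_getElem ht]
      rfl
    have hg : GoodStep G Gl[t] := hgood _ (List.getElem_mem ht)
    show G.Adj (applyL (Gl.take t) u) (applyL (Gl.take (t+1)) u)
    rw [h1, applyL_append, applyL_singleton]
    exact hg.1 _
  · intro u w
    exact hvisit (u, w) (by simp [Finset.mem_toList])
  · intro t ht u w huw h
    simp only at h
    apply huw
    have hgood' : ∀ g ∈ Gl.take t, GoodStep G g :=
      fun g hg => hgood g (List.mem_of_mem_take hg)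
    have := applyL_reverse_applyL G (Gl.take t) hgood' u
    rw [h, applyL_reverse_applyL G (Gl.take t) hgood' w] at this
    exact this.symm
end

section
/- Let G be a connected graph on n > 3 vertices that is Cartesian-topfull, i.e., there exists a patient collision-free ℓ-tour of n − 1 weak walks on G (each weak walk surjective onto V(G), exactly one player moving along an edge at each step, players pairwise distinct at each time). Then G has no cut vertex. -/
/-- Core lemma: a player cannot cross from a "component" `P` (a set closed under
adjacency avoiding the cut vertex `v`) to its outside, given the vacant-vertex dynamics. -/
lemma stmt_17_core {V : Type*} {G : SimpleGraph V} {ℓ : ℕ} {m : ℕ} {f : Fin m → ℕ → V}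
    {vac : ℕ → V}
    (hweak : ∀ i, ∀ t < ℓ, f i t = f i (t + 1) ∨ G.Adj (f i t) (f i (t + 1)))
    (hM : ∀ t < ℓ, ∀ i, f i t ≠ f i (t + 1) → vac t = f i (t + 1) ∧ vac (t + 1) = f i t)
    (hV : ∀ t < ℓ, G.Adj (vac (t + 1)) (vac t))
    (hP1 : ∀ t ≤ ℓ, ∀ k, f k t ≠ vac t)
    (P : Set V) (v : V) (hvP : v ∉ P)
    (hcl : ∀ x ∈ P, ∀ y, G.Adj x y → y ≠ v → y ∈ P)
    (i : Fin m) (p q : ℕ) (hpq : p ≤ q) (hqℓ : q ≤ ℓ)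
    (hfp : f i p ∈ P) (hfq : f i q ∉ P) (hfqv : f i q ≠ v) : False := by
  classical
  obtain ⟨s, hsP, hsq, hgr⟩ : ∃ s, f i s ∈ P ∧ s ≤ q ∧ ∀ u, s < u → u ≤ q → f i u ∉ P :=
    ⟨Nat.findGreatest (fun u => f i u ∈ P) q,
      Nat.findGreatest_spec (P := fun u => f i u ∈ P) hpq hfp,
      Nat.findGreatest_le (P := fun u => f i u ∈ P) q,
      fun u h1 h2 => Nat.findGreatest_is_greatest h1 h2⟩
  have hsltq : s < q := lt_of_le_of_ne hsq (fun h => hfq (h ▸ hsP))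
  -- step at s : player i moves from P into v
  have hsℓ : s < ℓ := lt_of_lt_of_le hsltq hqℓ
  have hs1v : f i (s + 1) = v := by
    rcases hweak i s hsℓ with heq | hadj
    · exact absurd (heq ▸ hsP) (hgr (s+1) (Nat.lt_succ_self s) hsltq)
    · by_contra hne
      exact hgr (s+1) (Nat.lt_succ_self s) hsltq (hcl _ hsP _ hadj hne)
  -- t : first time after s when player i leaves v
  have hexu : ∃ u, s < u ∧ f i u ≠ v := ⟨q, hsltq, hfqv⟩
  obtain ⟨t, hst, htv, htq, hsit⟩ :
      ∃ t, s < t ∧ f i t ≠ v ∧ t ≤ q ∧ ∀ u, s < u → u < t → f i u = v := by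
    refine ⟨Nat.find hexu, (Nat.find_spec hexu).1, (Nat.find_spec hexu).2,
      Nat.find_min' hexu ⟨hsltq, hfqv⟩, ?_⟩
    intro u h1 h2
    have := Nat.find_min hexu h2
    push_neg at this
    exact this h1
  have hts2 : s + 2 ≤ t := by
    by_contra h
    have h1 : t = s + 1 := by omega
    exact htv (h1 ▸ hs1v)
  obtain ⟨T, rfl⟩ : ∃ T, t = T + 1 := ⟨t - 1, by omega⟩
  have hsT : s + 1 ≤ T := by omega
  have hTv : f i T = v := hsit T (by omega) (by omega)
  have hfT1P : f i (T + 1) ∉ P := hgr (T+1) hst htq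
  -- the mover at step s is i, so vac (s+1) = f i s ∈ P
  have hmoveS := hM s hsℓ i (by rw [hs1v]; exact fun h => hvP (h ▸ hsP))
  -- the mover at step T is i, so vac T = f i (T+1) ∉ P
  have hTℓ : T < ℓ := by omega
  have hmoveT := hM T hTℓ i (by rw [hTv]; exact fun h => htv h.symm)
  -- the vacant vertex stays in P from time s+1 to T
  have key : ∀ u, s + 1 ≤ u → u ≤ T → vac u ∈ P := by
    intro u hu
    induction u, hu using Nat.le_induction with
    | base => intro _; rw [hmoveS.2]; exact hsP
    | succ u hu ih =>
      intro huT
      have hvacu : vac u ∈ P := ih (by omega)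
      have huℓ : u < ℓ := by omega
      have hne : vac (u + 1) ≠ v := by
        have hfv : f i (u + 1) = v := hsit (u+1) (by omega) (by omega)
        intro h
        exact hP1 (u+1) (by omega) i (by rw [hfv, h])
      exact hcl _ hvacu _ (hV u huℓ).symm hne
  have hTP : vac T ∈ P := key T hsT le_rfl
  rw [hmoveT.1] at hTP
  exact hfT1P hTP

/-- If a connected graph `G` on `n > 3` vertices is Cartesian-topfull, i.e. admits a patient
collision-free tour of `n − 1` surjective weak walks, then `G` has no cut vertex. -/
theorem stmt_17 {V : Type*} [Fintype V] (G : SimpleGraph V) (hconn : G.Connected)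
    (hn : 3 < Fintype.card V) (ℓ : ℕ)
    (f : Fin (Fintype.card V - 1) → ℕ → V)
    (hweak : ∀ i, ∀ t < ℓ, f i t = f i (t + 1) ∨ G.Adj (f i t) (f i (t + 1)))
    (hpatient : ∀ t < ℓ, ∃ j, G.Adj (f j t) (f j (t + 1)) ∧
      ∀ i, i ≠ j → f i t = f i (t + 1))
    (hsurj : ∀ i, ∀ v : V, ∃ t ≤ ℓ, f i t = v)
    (hcf : ∀ t ≤ ℓ, ∀ i j, i ≠ j → f i t ≠ f j t) :
    ∀ v : V, (G.induce {u : V | u ≠ v}).Connected := by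
  classical
  -- the vacant vertex
  have hex : ∀ t, ∃ w, t ≤ ℓ → ∀ k, f k t ≠ w := by
    intro t
    by_cases ht : t ≤ ℓ
    · by_contra h
      push_neg at h
      have hsurj' : Function.Surjective (fun k => f k t) := fun w => (h w).2
      have := Fintype.card_le_of_surjective _ hsurj'
      simp [Fintype.card_fin] at this
      omega
    · have : Nonempty V := by
        have : 0 < Fintype.card V := by omega
        exact Fintype.card_pos_iff.mp this
      exact ⟨Classical.arbitrary V, fun h => absurd h ht⟩
  choose vac hvac using hex
  have hP1 : ∀ t ≤ ℓ, ∀ k, f k t ≠ vac t := fun t ht k => hvac t ht k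
  -- uniqueness of the vacant vertex
  have hP2 : ∀ t ≤ ℓ, ∀ w, (∀ k, f k t ≠ w) → w = vac t := by
    intro t ht w hw
    have hinj : Function.Injective (fun k => f k t) := by
      intro x y hxy
      by_contra hne
      exact hcf t ht x y hne hxy
    have hcard : (Finset.univ.image (fun k => f k t)).card = Fintype.card V - 1 := by
      rw [Finset.card_image_of_injective _ hinj]
      simp
    have hsd : (Finset.univ \ Finset.univ.image (fun k => f k t)).card = 1 := by
      rw [Finset.card_sdiff_of_subset (Finset.subset_univ _), hcard, Finset.card_univ]
      omega
    have hwmem : w ∈ Finset.univ \ Finset.univ.image (fun k => f k t) := by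
      simp only [Finset.mem_sdiff, Finset.mem_univ, true_and, Finset.mem_image]
      rintro ⟨k, hk⟩
      exact hw k hk
    have hvmem : vac t ∈ Finset.univ \ Finset.univ.image (fun k => f k t) := by
      simp only [Finset.mem_sdiff, Finset.mem_univ, true_and, Finset.mem_image]
      rintro ⟨k, hk⟩
      exact hP1 t ht k hk
    exact Finset.card_le_one.mp (le_of_eq hsd) _ hwmem _ hvmem
  -- mover dynamics
  have hM : ∀ t < ℓ, ∀ i, f i t ≠ f i (t + 1) →
      vac t = f i (t + 1) ∧ vac (t + 1) = f i t := by
    intro t htℓ i hne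
    obtain ⟨j, hadj, hstay⟩ := hpatient t htℓ
    have hij : i = j := by
      by_contra h
      exact hne (hstay i h)
    subst hij
    constructor
    · refine (hP2 t (le_of_lt htℓ) _ (fun k => ?_)).symm
      by_cases hk : k = i
      · subst hk; exact hadj.ne
      · rw [hstay k hk]
        exact hcf (t+1) htℓ k i hk
    · refine (hP2 (t+1) htℓ _ (fun k => ?_)).symm
      by_cases hk : k = i
      · subst hk; exact hadj.ne'
      · rw [← hstay k hk]
        exact hcf t (le_of_lt htℓ) k i hk
  have hV' : ∀ t < ℓ, G.Adj (vac (t + 1)) (vac t) := by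
    intro t htℓ
    obtain ⟨j, hadj, _⟩ := hpatient t htℓ
    obtain ⟨h1, h2⟩ := hM t htℓ j hadj.ne
    rw [h1, h2]
    exact hadj
  intro v
  rw [SimpleGraph.connected_iff]
  constructor
  · rintro ⟨a, ha⟩ ⟨b, hb⟩
    by_contra hreach
    set P : Set V := {x | ∃ hx : x ≠ v, (G.induce {u : V | u ≠ v}).Reachable ⟨a, ha⟩ ⟨x, hx⟩}
      with hP
    have hvP : v ∉ P := fun ⟨h, _⟩ => h rfl
    have hcl : ∀ x ∈ P, ∀ y, G.Adj x y → y ≠ v → y ∈ P := by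
      rintro x ⟨hx, hr⟩ y hadj hy
      refine ⟨hy, hr.trans (SimpleGraph.Adj.reachable ?_)⟩
      simp only [SimpleGraph.induce_eq_coe_induce_top, SimpleGraph.Subgraph.coe_adj,
        SimpleGraph.Subgraph.induce_adj, SimpleGraph.Subgraph.top_adj]
      exact ⟨hx, hy, hadj⟩
    have haP : a ∈ P := ⟨ha, SimpleGraph.Reachable.refl _⟩
    have hbP : b ∉ P := by
      rintro ⟨hx, hr⟩
      exact hreach hr
    have hcl' : ∀ x, x ∉ P → x ≠ v → ∀ y, G.Adj x y → y ≠ v → (y ∉ P) := by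
      intro x hx hxv y hadj hy hyP
      exact hx (hcl y hyP x hadj.symm hxv)
    obtain ⟨i⟩ : Nonempty (Fin (Fintype.card V - 1)) := ⟨⟨0, by omega⟩⟩
    obtain ⟨p, hpl, hfp⟩ := hsurj i a
    obtain ⟨q, hql, hfq⟩ := hsurj i b
    rcases le_or_gt p q with hpq | hpq
    · exact stmt_17_core hweak hM hV' hP1 P v hvP hcl i p q hpq hql
        (hfp ▸ haP) (hfq ▸ hbP) (hfq ▸ hb)
    · -- symmetric: use the complement component
      set Q : Set V := {x | x ∉ P ∧ x ≠ v} with hQ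
      have hvQ : v ∉ Q := fun h => h.2 rfl
      have hclQ : ∀ x ∈ Q, ∀ y, G.Adj x y → y ≠ v → y ∈ Q := by
        rintro x ⟨hx1, hx2⟩ y hadj hy
        exact ⟨hcl' x hx1 hx2 y hadj hy, hy⟩
      have hbQ : b ∈ Q := ⟨hbP, hb⟩
      have haQ : a ∉ Q := fun h => h.1 haP
      exact stmt_17_core hweak hM hV' hP1 Q v hvQ hclQ i q p (le_of_lt hpq) hpl
        (hfq ▸ hbQ) (hfp ▸ haQ) (hfp ▸ ha)
  · obtain ⟨u, hu⟩ := Fintype.exists_ne_of_one_lt_card (by omega) v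
    exact ⟨⟨u, hu⟩⟩
end

section
/- Let G be a connected graph on n > 3 vertices with no cut vertex. Then G is Cartesian-topfull: there exists ℓ ≥ 0 and weak walks f₁,...,f_{n−1} : {0,...,ℓ} → V(G), each surjective onto V(G), with f_i(t) pairwise distinct at every time t, and such that at each time step exactly one f_j moves along an edge of G and all other walks stay in place. -/
open Function

namespace Stmt18Aux

variable {V : Type*} (G : SimpleGraph V) {m : ℕ}

/-- Execute a list of moves: each move names the piece that slides into the hole. -/
def run (p : Fin m → V) (h : V) : List (Fin m) → (Fin m → V) × V
  | [] => (p, h)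
  | j :: M => run (Function.update p j h) (p j) M

/-- A move list is valid: each moving piece is adjacent to the current hole. -/
def Valid (p : Fin m → V) (h : V) : List (Fin m) → Prop
  | [] => True
  | j :: M => G.Adj (p j) h ∧ Valid (Function.update p j h) (p j) M

/-- Configuration invariant. -/
def Inv (p : Fin m → V) (h : V) : Prop := Function.Injective p ∧ h ∉ Set.range p

lemma run_append (p : Fin m → V) (h : V) (A B : List (Fin m)) :
    run p h (A ++ B) = run (run p h A).1 (run p h A).2 B := by
  induction A generalizing p h with
  | nil => rfl
  | cons j A ih => simp [run, ih]

lemma valid_append (p : Fin m → V) (h : V) (A B : List (Fin m)) :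
    Valid G p h (A ++ B) ↔ Valid G p h A ∧ Valid G (run p h A).1 (run p h A).2 B := by
  induction A generalizing p h with
  | nil => simp [Valid, run]
  | cons j A ih => simp [Valid, run, ih, and_assoc]

lemma inv_step (p : Fin m → V) (h : V) (j : Fin m) (hinv : Inv p h) :
    Inv (Function.update p j h) (p j) := by
  obtain ⟨hinj, hh⟩ := hinv
  constructor
  · intro x y hxy
    simp only [Function.update_apply] at hxy
    split_ifs at hxy with hx hy hy
    · rw [hx, hy]
    · exact absurd ⟨y, hxy.symm⟩ hh
    · exact absurd ⟨x, hxy⟩ hh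
    · exact hinj hxy
  · rintro ⟨k, hk⟩
    simp only [Function.update_apply] at hk
    split_ifs at hk with hkj
    · exact hh ⟨j, hk.symm⟩
    · exact hkj (hinj hk)

lemma inv_run (p : Fin m → V) (h : V) (M : List (Fin m)) (hinv : Inv p h) :
    Inv (run p h M).1 (run p h M).2 := by
  induction M generalizing p h with
  | nil => exact hinv
  | cons j M ih => exact ih _ _ (inv_step p h j hinv)

/-- Every non-hole vertex is occupied. -/
lemma full [Fintype V] (hcard : Fintype.card V = m + 1) (p : Fin m → V) (h : V)
    (hinv : Inv p h) (v : V) (hv : v ≠ h) : ∃ j, p j = v := by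
  classical
  obtain ⟨hinj, hh⟩ := hinv
  have h1 : h ∉ Finset.image p Finset.univ := by
    simp only [Finset.mem_image]
    rintro ⟨j, -, hj⟩; exact hh ⟨j, hj⟩
  have hc : (insert h (Finset.image p Finset.univ)).card = Fintype.card V := by
    rw [Finset.card_insert_of_notMem h1, Finset.card_image_of_injective _ hinj,
      Finset.card_univ, Fintype.card_fin, hcard]
  have : insert h (Finset.image p Finset.univ) = Finset.univ :=
    Finset.eq_univ_of_card _ hc
  have hv' : v ∈ insert h (Finset.image p Finset.univ) := this ▸ Finset.mem_univ v
  rcases Finset.mem_insert.1 hv' with h' | h'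
  · exact absurd h' hv
  · obtain ⟨j, -, hj⟩ := Finset.mem_image.1 h'
    exact ⟨j, hj⟩

/-- Piece `i` visits vertex `v` during execution of `M`. -/
def Visits (p : Fin m → V) (h : V) (M : List (Fin m)) (i : Fin m) (v : V) : Prop :=
  ∃ t ≤ M.length, (run p h (M.take t)).1 i = v

lemma visits_append_left (p : Fin m → V) (h : V) (M₁ M₂ : List (Fin m)) (i : Fin m) (v : V)
    (hv : Visits p h M₁ i v) : Visits p h (M₁ ++ M₂) i v := by
  obtain ⟨t, ht, hval⟩ := hv
  refine ⟨t, by simp; omega, ?_⟩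
  rwa [List.take_append_of_le_length ht]

lemma visits_append_right (p : Fin m → V) (h : V) (M₁ M₂ : List (Fin m)) (i : Fin m) (v : V)
    (hv : Visits (run p h M₁).1 (run p h M₁).2 M₂ i v) : Visits p h (M₁ ++ M₂) i v := by
  obtain ⟨t, ht, hval⟩ := hv
  refine ⟨M₁.length + t, by simp; omega, ?_⟩
  have : (M₁ ++ M₂).take (M₁.length + t) = M₁ ++ M₂.take t := by
    rw [List.take_append]
    simp
  rw [this, run_append]
  exact hval

/-- Transport the hole to target `b` while keeping the piece `i₀` (sitting at `u`) fixed. -/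
lemma holeTo [Fintype V] (hcard : Fintype.card V = m + 1) (u : V) (i₀ : Fin m) :
    ∀ (a b : {w : V | w ≠ u}) (W : (G.induce {w : V | w ≠ u}).Walk a b) (p : Fin m → V),
      Inv p ↑a → p i₀ = u →
      ∃ M, Valid G p ↑a M ∧ (run p (↑a) M).1 i₀ = u ∧ (run p (↑a) M).2 = ↑b := by
  intro a b W
  induction W with
  | nil => exact fun p hinv hp => ⟨[], trivial, hp, rfl⟩
  | @cons c d b hadj W ih =>
    intro p hinv hp
    have hadj' : G.Adj ↑c ↑d := hadj
    have hdc : (d : V) ≠ ↑c := fun h => G.irrefl (h ▸ hadj')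
    obtain ⟨j, hj⟩ := full hcard p ↑c hinv ↑d hdc
    have hji : j ≠ i₀ := by
      intro h; exact d.2 (by rw [← hj, h, hp])
    obtain ⟨M, hM, hMi, hMh⟩ := ih (Function.update p j ↑c)
      (by have := inv_step p (↑c) j hinv; rwa [hj] at this)
      (by rw [Function.update_of_ne hji.symm.symm.symm]; exact hp)
    refine ⟨j :: M, ⟨by rw [hj]; exact hadj'.symm, ?_⟩, ?_, ?_⟩
    · rw [hj]; exact hM
    · simpa [run, hj] using hMi
    · simpa [run, hj] using hMh

/-- Guide piece `i₀` along a walk in `G`, visiting every vertex of its support. -/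
lemma guide [Fintype V] (hcard : Fintype.card V = m + 1)
    (hnocut : ∀ v : V, (G.induce {u : V | u ≠ v}).Connected) (i₀ : Fin m) :
    ∀ (a b : V) (W : G.Walk a b) (p : Fin m → V) (h : V), Inv p h → p i₀ = a →
      ∃ M, Valid G p h M ∧ (run p h M).1 i₀ = b ∧ ∀ v ∈ W.support, Visits p h M i₀ v := by
  intro a b W
  induction W with
  | nil =>
    intro p h hinv hp
    refine ⟨[], trivial, hp, ?_⟩
    intro v hv
    rw [SimpleGraph.Walk.support_nil, List.mem_singleton] at hv
    exact ⟨0, by simp, by rw [hv]; simpa [run] using hp⟩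
  | @cons a c b hadj W ih =>
    intro p h hinv hp
    have hha : h ≠ a := fun h' => hinv.2 ⟨i₀, by rw [hp, h']⟩
    have hca : c ≠ a := hadj.ne'
    obtain ⟨Wh⟩ := ((hnocut a).preconnected ⟨h, hha⟩ ⟨c, hca⟩)
    obtain ⟨M₁, hM₁v, hM₁i, hM₁h⟩ := holeTo G hcard a i₀ ⟨h, hha⟩ ⟨c, hca⟩ Wh p hinv hp
    set p₁ := (run p h M₁).1 with hp₁
    have hinv₁ : Inv p₁ (run p h M₁).2 := inv_run p h M₁ hinv
    have hinv₁' : Inv p₁ c := by rwa [hM₁h] at hinv₁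
    -- the single move of piece i₀ into the hole at c
    set A := M₁ ++ [i₀] with hA
    have hrunA : run p h A = (Function.update p₁ i₀ c, a) := by
      rw [hA, run_append]
      simp [run, ← hp₁, hM₁h, hM₁i]
    have hinvA : Inv (Function.update p₁ i₀ c) a := by
      have := inv_step p₁ c i₀ hinv₁'
      rwa [hM₁i] at this
    obtain ⟨M₃, hM₃v, hM₃i, hM₃vis⟩ := ih (Function.update p₁ i₀ c) a hinvA
      (by rw [Function.update_self])
    refine ⟨A ++ M₃, ?_, ?_, ?_⟩
    · rw [valid_append, hrunA]
      refine ⟨?_, hM₃v⟩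
      rw [hA, valid_append]
      refine ⟨hM₁v, ?_⟩
      rw [hM₁h]
      exact ⟨by rw [← hp₁, hM₁i]; exact hadj, trivial⟩
    · rw [run_append, hrunA]
      exact hM₃i
    · intro v hv
      rw [SimpleGraph.Walk.support_cons, List.mem_cons] at hv
      rcases hv with rfl | hv'
      · exact ⟨0, by simp, by simpa [run] using hp⟩
      · have := hM₃vis v hv'
        have h2 := visits_append_right p h A M₃ i₀ v (by rw [hrunA]; exact this)
        exact h2

lemma walk_through (hpre : G.Preconnected) :
    ∀ (L : List V) (a : V), ∃ b, ∃ W : G.Walk a b, ∀ v ∈ L, v ∈ W.support := by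
  intro L
  induction L with
  | nil => exact fun a => ⟨a, SimpleGraph.Walk.nil, by simp⟩
  | cons v L ih =>
    intro a
    obtain ⟨W₁⟩ := hpre a v
    obtain ⟨b, W₂, hW₂⟩ := ih v
    refine ⟨b, W₁.append W₂, ?_⟩
    intro x hx
    rw [SimpleGraph.Walk.mem_support_append_iff]
    rcases List.mem_cons.1 hx with rfl | hx'
    · exact Or.inl (SimpleGraph.Walk.end_mem_support W₁)
    · exact Or.inr (hW₂ x hx')

/-- Main construction: a valid move list during which every listed piece visits every vertex. -/
lemma tour [Fintype V] (hcard : Fintype.card V = m + 1) (hconn : G.Connected)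
    (hnocut : ∀ v : V, (G.induce {u : V | u ≠ v}).Connected) :
    ∀ (L : List (Fin m)) (p : Fin m → V) (h : V), Inv p h →
      ∃ M, Valid G p h M ∧ ∀ i ∈ L, ∀ v, Visits p h M i v := by
  intro L
  induction L with
  | nil => exact fun p h _ => ⟨[], trivial, by simp⟩
  | cons i L ih =>
    intro p h hinv
    obtain ⟨b, W, hW⟩ := walk_through G hconn.preconnected Finset.univ.toList (p i)
    obtain ⟨M₁, hM₁v, hM₁i, hM₁vis⟩ := guide G hcard hnocut i (p i) b W p h hinv rfl
    obtain ⟨M₂, hM₂v, hM₂vis⟩ := ih (run p h M₁).1 (run p h M₁).2 (inv_run p h M₁ hinv)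
    refine ⟨M₁ ++ M₂, (valid_append G p h M₁ M₂).2 ⟨hM₁v, hM₂v⟩, ?_⟩
    intro j hj v
    rcases List.mem_cons.1 hj with rfl | hj'
    · exact visits_append_left p h M₁ M₂ j v (hM₁vis v (hW v (Finset.mem_toList.2 (Finset.mem_univ v))))
    · exact visits_append_right p h M₁ M₂ j v (hM₂vis j hj' v)

lemma validAt (p : Fin m → V) (h : V) (M : List (Fin m)) (hval : Valid G p h M)
    (t : ℕ) (ht : t < M.length) :
    G.Adj ((run p h (M.take t)).1 (M[t]'ht)) (run p h (M.take t)).2 := by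
  have hv2 : Valid G (run p h (M.take t)).1 (run p h (M.take t)).2 (M.drop t) :=
    ((valid_append G p h (M.take t) (M.drop t)).1
      (by rw [List.take_append_drop]; exact hval)).2
  rw [List.drop_eq_getElem_cons ht] at hv2
  exact hv2.1

lemma run_take_succ (p : Fin m → V) (h : V) (M : List (Fin m)) (t : ℕ) (ht : t < M.length) :
    run p h (M.take (t + 1)) =
      (Function.update (run p h (M.take t)).1 (M[t]'ht) (run p h (M.take t)).2,
        (run p h (M.take t)).1 (M[t]'ht)) := by
  have h1 : M.take (t + 1) = M.take t ++ [M[t]'ht] := by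
    rw [List.take_succ, List.getElem?_eq_getElem ht]
    rfl
  rw [h1, run_append]
  rfl

end Stmt18Aux

/-- Every connected graph on `n > 3` vertices without a cut vertex is Cartesian-topfull:
there is a patient collision-free tour of `n − 1` surjective weak walks. -/
theorem stmt_18 {V : Type*} [Fintype V] (G : SimpleGraph V) (hconn : G.Connected)
    (hn : 3 < Fintype.card V)
    (hnocut : ∀ v : V, (G.induce {u : V | u ≠ v}).Connected) :
    ∃ (ℓ : ℕ) (f : Fin (Fintype.card V - 1) → ℕ → V),
      (∀ i, ∀ t < ℓ, f i t = f i (t + 1) ∨ G.Adj (f i t) (f i (t + 1))) ∧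
      (∀ t < ℓ, ∃ j, G.Adj (f j t) (f j (t + 1)) ∧
        ∀ i, i ≠ j → f i t = f i (t + 1)) ∧
      (∀ i, ∀ v : V, ∃ t ≤ ℓ, f i t = v) ∧
      (∀ t ≤ ℓ, ∀ i j, i ≠ j → f i t ≠ f j t) := by
  classical
  set m := Fintype.card V - 1 with hm
  have hcard : Fintype.card V = m + 1 := by omega
  let e : Fin (m + 1) ≃ V := (finCongr hcard.symm).trans (Fintype.equivFin V).symm
  set p₀ : Fin m → V := fun i => e i.castSucc with hp₀
  set h₀ : V := e (Fin.last m) with hh₀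
  have hinv : Stmt18Aux.Inv p₀ h₀ := by
    constructor
    · intro x y hxy
      exact Fin.castSucc_injective m (e.injective hxy)
    · rintro ⟨k, hk⟩
      exact absurd (e.injective hk) (Fin.castSucc_lt_last k).ne
  obtain ⟨M, hMv, hMvis⟩ := Stmt18Aux.tour G hcard hconn hnocut Finset.univ.toList p₀ h₀ hinv
  refine ⟨M.length, fun i t => (Stmt18Aux.run p₀ h₀ (M.take t)).1 i, ?_, ?_, ?_, ?_⟩
  · intro i t ht
    by_cases hij : i = M[t]'ht
    · right
      subst hij
      have hA := Stmt18Aux.validAt G p₀ h₀ M hMv t ht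
      simp only [Stmt18Aux.run_take_succ p₀ h₀ M t ht, Function.update_self]
      exact hA
    · left
      simp only [Stmt18Aux.run_take_succ p₀ h₀ M t ht]
      rw [Function.update_of_ne hij]
  · intro t ht
    refine ⟨M[t]'ht, ?_, ?_⟩
    · have hA := Stmt18Aux.validAt G p₀ h₀ M hMv t ht
      simp only [Stmt18Aux.run_take_succ p₀ h₀ M t ht, Function.update_self]
      exact hA
    · intro i hij
      simp only [Stmt18Aux.run_take_succ p₀ h₀ M t ht]
      rw [Function.update_of_ne hij]
  · intro i v
    exact hMvis i (Finset.mem_toList.2 (Finset.mem_univ i)) v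
  · intro t ht i j hij hEq
    exact hij ((Stmt18Aux.inv_run p₀ h₀ (M.take t) hinv).1 hEq)
end
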